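/- arXiv:2202.13744 — 6 statements merged into one kernel-verified Lean document; each statement's English description precedes it below -/
import Mathlib

section
/- Let J : ℝ^p → ℝ be locally Lipschitz with conservative gradient D_J : ℝ^p ⇒ ℝ^p, and set crit D_J := {x ∈ ℝ^p : 0 ∈ D_J(x)}. Then J is a Lyapunov function for crit D_J and the differential inclusion ẇ ∈ −D_J(w): for every absolutely continuous solution w : ℝ₊ → ℝ^p of ẇ(t) ∈ −D_J(w(t)) a.e. with w(0) = x, one has (i) J(w(t)) ≤ J(x) for all t ≥ 0, and (ii) if x ∉ crit D_J then J(w(t)) < J(x) for all t > 0. -/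
open MeasureTheory Filter Topology Set

noncomputable section

/-- A vector-valued function is absolutely continuous on a set `s` of reals. -/
def AbsolutelyContinuousOnSet {E : Type*} [NormedAddCommGroup E] (f : ℝ → E) (s : Set ℝ) : Prop :=
  ∀ ε > (0:ℝ), ∃ δ > (0:ℝ), ∀ n : ℕ, ∀ a b : Fin n → ℝ,
    (∀ i, a i ≤ b i ∧ Set.Icc (a i) (b i) ⊆ s) →
    (Pairwise fun i j => Disjoint (Set.Ioo (a i) (b i)) (Set.Ioo (a j) (b j))) →
    (∑ i, (b i - a i)) < δ → (∑ i, ‖f (b i) - f (a i)‖) < ε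

/-- `D` is a conservative gradient for `f : ℝ^p → ℝ`. -/
def IsConservativeGradient {p : ℕ} (f : EuclideanSpace ℝ (Fin p) → ℝ)
    (D : EuclideanSpace ℝ (Fin p) → Set (EuclideanSpace ℝ (Fin p))) : Prop :=
  (∀ x, (D x).Nonempty ∧ IsCompact (D x)) ∧
  IsClosed {q : EuclideanSpace ℝ (Fin p) × EuclideanSpace ℝ (Fin p) | q.2 ∈ D q.1} ∧
  (∀ x, ∃ U ∈ 𝓝 x, ∃ M : ℝ, ∀ z ∈ U, ∀ y ∈ D z, ‖y‖ ≤ M) ∧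
  ∀ γ : ℝ → EuclideanSpace ℝ (Fin p), AbsolutelyContinuousOnSet γ (Set.Icc 0 1) →
    ∀ᵐ t ∂(volume.restrict (Set.Icc (0:ℝ) 1)),
      ∃ g d, HasDerivAt γ g t ∧ HasDerivAt (f ∘ γ) d t ∧
        ∀ v ∈ D (γ t), d = (inner ℝ v g : ℝ)

section Auxiliary

/-- A tagged partition of `[a,b]` subordinate to the gauge `r`. -/
def TaggedPart (r : ℝ → ℝ) (a b : ℝ) : Prop :=
  ∃ n : ℕ, ∃ t x : ℕ → ℝ, t 0 = a ∧ t n = b ∧ (∀ i < n, t i ≤ t (i+1)) ∧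
    (∀ i < n, x i ∈ Icc (t i) (t (i+1)) ∧
      Icc (t i) (t (i+1)) ⊆ Metric.ball (x i) (r (x i)))

lemma TaggedPart.extend {r : ℝ → ℝ} {a y c : ℝ} (h : TaggedPart r a y) (ξ : ℝ)
    (hyc : y ≤ c) (hξ : ξ ∈ Icc y c) (hsub : Icc y c ⊆ Metric.ball ξ (r ξ)) :
    TaggedPart r a c := by
  obtain ⟨n, t, x, h0, hn, hmono, htag⟩ := h
  refine ⟨n+1, fun i => if i ≤ n then t i else c, fun i => if i < n then x i else ξ,
    ?_, ?_, ?_, ?_⟩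
  · simpa [Nat.zero_le] using h0
  · simp
  · intro i hi
    beta_reduce
    rcases lt_or_ge i n with h | h
    · rw [if_pos h.le, if_pos (by omega : i + 1 ≤ n)]
      exact hmono i h
    · have hin : i = n := by omega
      subst hin
      rw [if_pos (le_refl i), if_neg (by omega : ¬ (i + 1 ≤ i)), hn]
      exact hyc
  · intro i hi
    beta_reduce
    rcases lt_or_ge i n with h | h
    · rw [if_pos h.le, if_pos (by omega : i + 1 ≤ n), if_pos h]
      exact htag i h
    · have hin : i = n := by omega
      subst hin
      rw [if_pos (le_refl i), if_neg (by omega : ¬ (i + 1 ≤ i)), if_neg (lt_irrefl i), hn]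
      exact ⟨hξ, hsub⟩

/-- Cousin's lemma: every gauge on `[a,b]` admits a subordinate tagged partition. -/
lemma cousin_lemma (a b : ℝ) (hab : a ≤ b) (r : ℝ → ℝ) (hr : ∀ x ∈ Icc a b, 0 < r x) :
    TaggedPart r a b := by
  have hPa : TaggedPart r a a := ⟨0, fun _ => a, fun _ => a, rfl, rfl, by omega, by omega⟩
  set S : Set ℝ := {y | y ∈ Icc a b ∧ TaggedPart r a y} with hS
  have hne : S.Nonempty := ⟨a, ⟨le_refl a, hab⟩, hPa⟩
  have hbdd : BddAbove S := ⟨b, fun y hy => hy.1.2⟩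
  set c := sSup S with hc
  have hcmem : c ∈ Icc a b := ⟨le_csSup hbdd ⟨⟨le_refl a, hab⟩, hPa⟩,
    csSup_le hne fun y hy => hy.1.2⟩
  have hrc := hr c hcmem
  have hPc : TaggedPart r a c := by
    obtain ⟨y, hyS, hy⟩ := exists_lt_of_lt_csSup hne (by linarith : c - r c < c)
    refine hyS.2.extend c (le_csSup hbdd hyS) ⟨le_csSup hbdd hyS, le_refl c⟩ ?_
    intro z hz
    rw [Metric.mem_ball, Real.dist_eq, abs_lt]
    exact ⟨by have := hz.1; linarith, by have := hz.2; linarith⟩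
  have hcb : c = b := by
    by_contra h
    have hcb' : c < b := lt_of_le_of_ne hcmem.2 h
    set c' := min b (c + r c / 2) with hc'
    have hcc' : c < c' := lt_min hcb' (by linarith)
    have hmr : c' ≤ c + r c / 2 := min_le_right _ _
    have hc'mem : c' ∈ Icc a b := ⟨le_trans hcmem.1 hcc'.le, min_le_left _ _⟩
    have hPc' : TaggedPart r a c' := by
      refine hPc.extend c hcc'.le ⟨le_refl c, hcc'.le⟩ ?_
      intro z hz
      rw [Metric.mem_ball, Real.dist_eq, abs_lt]
      exact ⟨by have := hz.1; linarith, by have := hz.2; linarith⟩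
    exact absurd (le_csSup hbdd ⟨hc'mem, hPc'⟩) (not_le.mpr hcc')
  rw [← hcb]; exact hPc

/-- Main step: an absolutely continuous function whose derivative exists and is `≤ 0`
a.e. satisfies `f b - f a ≤ ε (b-a) + ε` for every `ε > 0`. -/
lemma ac_key {f : ℝ → ℝ} {a b : ℝ} (hab : a ≤ b)
    (hf : AbsolutelyContinuousOnSet f (Icc a b))
    (hder : ∀ᵐ t ∂(volume.restrict (Icc a b)), ∃ d ≤ 0, HasDerivAt f d t)
    {ε : ℝ} (hε : 0 < ε) : f b - f a ≤ ε * (b - a) + ε := by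
  classical
  obtain ⟨δ, hδ, hAC⟩ := hf ε hε
  -- the null set where the derivative hypothesis fails
  set N : Set ℝ := {t | ¬ ∃ d ≤ 0, HasDerivAt f d t} ∩ Icc a b with hN
  have hNnull : volume N = 0 := by
    have := (ae_iff.mp hder)
    rwa [Measure.restrict_apply' measurableSet_Icc] at this
  obtain ⟨U, hNU, hUopen, hUvol⟩ :
      ∃ U, N ⊆ U ∧ IsOpen U ∧ volume U < ENNReal.ofReal δ := by
    rcases Set.exists_isOpen_lt_of_lt N (ENNReal.ofReal δ)
      (by rw [hNnull]; exact ENNReal.ofReal_pos.mpr hδ) with ⟨U, h1, h2, h3⟩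
    exact ⟨U, h1, h2, h3⟩
  -- the gauge
  have key : ∀ z : ℝ, ∃ ρ > 0, z ∈ Icc a b →
      ((∀ u v, u ∈ Metric.ball z ρ → v ∈ Metric.ball z ρ → u ≤ z → z ≤ v →
        f v - f u ≤ ε * (v - u)) ∨ Metric.ball z ρ ⊆ U) := by
    intro z
    by_cases hz : z ∈ Icc a b
    · by_cases hgood : ∃ d ≤ 0, HasDerivAt f d z
      · obtain ⟨d, hd0, hd⟩ := hgood
        have h1 : ∀ᶠ y in 𝓝 z, ‖f y - f z - (y - z) * d‖ ≤ ε * ‖y - z‖ := by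
          have := hd.isLittleO.def hε
          simpa [smul_eq_mul, mul_comm] using this
        rw [Metric.eventually_nhds_iff] at h1
        obtain ⟨ρ, hρ, hball⟩ := h1
        refine ⟨ρ, hρ, fun _ => Or.inl fun u v hu hv huz hzv => ?_⟩
        have h2 := hball (show dist u z < ρ by simpa [Metric.mem_ball] using hu)
        have h3 := hball (show dist v z < ρ by simpa [Metric.mem_ball] using hv)
        have hu' : |u - z| = z - u := by rw [abs_of_nonpos (by linarith)]; ring
        have hv' : |v - z| = v - z := abs_of_nonneg (by linarith)
        rw [Real.norm_eq_abs, Real.norm_eq_abs, hu', abs_le] at h2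
        rw [Real.norm_eq_abs, Real.norm_eq_abs, hv', abs_le] at h3
        have hmul : (v - u) * d ≤ 0 :=
          mul_nonpos_of_nonneg_of_nonpos (by linarith) hd0
        nlinarith [h2.1, h2.2, h3.1, h3.2]
      · have hzU : z ∈ U := hNU ⟨hgood, hz⟩
        obtain ⟨ρ, hρ, hball⟩ := Metric.isOpen_iff.mp hUopen z hzU
        exact ⟨ρ, hρ, fun _ => Or.inr hball⟩
    · exact ⟨1, one_pos, fun h => absurd h hz⟩
  choose r hrpos hrprop using key
  obtain ⟨n, t, x, h0, hn, hmono, htag⟩ :=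
    cousin_lemma a b hab r fun z _ => hrpos z
  -- monotonicity of the partition points
  have chain : ∀ j, j ≤ n → ∀ i, i ≤ j → t i ≤ t j := by
    intro j
    induction j with
    | zero =>
      intro _ i hi
      have : i = 0 := by omega
      rw [this]
    | succ k ih =>
      intro hk i hi
      rcases Nat.lt_or_ge i (k+1) with h | h
      · exact le_trans (ih (by omega) i (by omega)) (hmono k (by omega))
      · have : i = k + 1 := by omega
        rw [this]
  have tmem : ∀ i, i ≤ n → t i ∈ Icc a b := by
    intro i hi
    constructor
    · rw [← h0]; exact chain i hi 0 (by omega)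
    · rw [← hn]; exact chain n le_rfl i hi
  have xmem : ∀ i, i < n → x i ∈ Icc a b := by
    intro i hi
    have h1 := (htag i hi).1
    exact ⟨le_trans (tmem i (by omega)).1 h1.1, le_trans h1.2 (tmem (i+1) (by omega)).2⟩
  have len_nonneg : ∀ i ∈ Finset.range n, (0:ℝ) ≤ t (i+1) - t i := by
    intro i hi
    have := hmono i (Finset.mem_range.mp hi)
    linarith
  -- split the index set according to the gauge alternative
  set Agood : Finset ℕ := (Finset.range n).filter (fun i =>
    ∀ u v, u ∈ Metric.ball (x i) (r (x i)) → v ∈ Metric.ball (x i) (r (x i)) →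
      u ≤ x i → x i ≤ v → f v - f u ≤ ε * (v - u)) with hAgood
  set Bbad : Finset ℕ := (Finset.range n).filter (fun i => ¬
    ∀ u v, u ∈ Metric.ball (x i) (r (x i)) → v ∈ Metric.ball (x i) (r (x i)) →
      u ≤ x i → x i ≤ v → f v - f u ≤ ε * (v - u)) with hBbad
  have hBU : ∀ i ∈ Bbad, Metric.ball (x i) (r (x i)) ⊆ U := by
    intro i hi
    rw [hBbad, Finset.mem_filter, Finset.mem_range] at hi
    rcases hrprop (x i) (xmem i hi.1) with h | h
    · exact absurd h hi.2
    · exact h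
  -- bound on the good part
  have hAbound : ∀ i ∈ Agood, f (t (i+1)) - f (t i) ≤ ε * (t (i+1) - t i) := by
    intro i hi
    rw [hAgood, Finset.mem_filter, Finset.mem_range] at hi
    obtain ⟨hin, hprop⟩ := hi
    obtain ⟨⟨hx1, hx2⟩, hsub⟩ := htag i hin
    exact hprop (t i) (t (i+1)) (hsub ⟨le_rfl, hmono i hin⟩)
      (hsub ⟨hmono i hin, le_rfl⟩) hx1 hx2
  -- bound on the bad part via absolute continuity
  have hBbound : ∑ i ∈ Bbad, (f (t (i+1)) - f (t i)) ≤ ε := by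
    set m := Bbad.card with hm
    set e := Bbad.orderIsoOfFin rfl with he
    set A' : Fin m → ℝ := fun k => t (e k) with hA'
    set B' : Fin m → ℝ := fun k => t ((e k : ℕ) + 1) with hB'
    have hBn : ∀ k : Fin m, ((e k : ℕ)) < n := by
      intro k
      exact Finset.mem_range.mp (Finset.mem_of_subset (Finset.filter_subset _ _) (e k).2)
    have hcond : ∀ k, A' k ≤ B' k ∧ Icc (A' k) (B' k) ⊆ Icc a b := by
      intro k
      refine ⟨hmono _ (hBn k), ?_⟩
      intro z hz
      exact ⟨le_trans (tmem _ (hBn k).le).1 hz.1, le_trans hz.2 (tmem _ (hBn k)).2⟩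
    have hdisj : Pairwise fun k l => Disjoint (Ioo (A' k) (B' k)) (Ioo (A' l) (B' l)) := by
      have main : ∀ k l : Fin m, k < l → Disjoint (Ioo (A' k) (B' k)) (Ioo (A' l) (B' l)) := by
        intro k l hkl
        have h1 : ((e k : ℕ)) + 1 ≤ (e l : ℕ) := by
          have := e.strictMono hkl
          have h2 : (e k : ℕ) < (e l : ℕ) := this
          omega
        have h2 : B' k ≤ A' l := chain _ (hBn l).le _ h1
        rw [Set.disjoint_left]
        intro z hz1 hz2
        exact absurd (lt_of_lt_of_le hz1.2 h2) (not_lt.mpr hz2.1.le)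
      intro k l hkl
      rcases lt_or_gt_of_ne hkl with h | h
      · exact main k l h
      · exact (main l k h).symm
    have hsum : ∑ k, (B' k - A' k) < δ := by
      have hmeas : ∀ k : Fin m, MeasurableSet (Ioo (A' k) (B' k)) := fun k => measurableSet_Ioo
      have hsubU : ∀ k : Fin m, Ioo (A' k) (B' k) ⊆ U := by
        intro k
        refine subset_trans (subset_trans Ioo_subset_Icc_self ((htag _ (hBn k)).2)) ?_
        exact hBU _ (e k).2
      have h1 : volume (⋃ k, Ioo (A' k) (B' k)) = ∑ k, volume (Ioo (A' k) (B' k)) := by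
        rw [measure_iUnion hdisj hmeas, tsum_fintype]
      have h2 : volume (⋃ k, Ioo (A' k) (B' k)) ≤ volume U :=
        measure_mono (Set.iUnion_subset hsubU)
      have h3 : ∑ k, volume (Ioo (A' k) (B' k)) < ENNReal.ofReal δ :=
        lt_of_le_of_lt (h1 ▸ h2) hUvol
      have h4 : ∀ k : Fin m, volume (Ioo (A' k) (B' k)) = ENNReal.ofReal (B' k - A' k) :=
        fun k => Real.volume_Ioo
      rw [Finset.sum_congr rfl (fun k _ => h4 k)] at h3
      rw [← ENNReal.ofReal_sum_of_nonneg (fun k _ => by linarith [(hcond k).1])] at h3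
      exact (ENNReal.ofReal_lt_ofReal_iff_of_nonneg (Finset.sum_nonneg
        (fun k _ => by linarith [(hcond k).1]))).mp h3
    have hACres := hAC m A' B' hcond hdisj hsum
    have heq : ∑ i ∈ Bbad, (f (t (i+1)) - f (t i)) = ∑ k, (f (B' k) - f (A' k)) := by
      rw [← Finset.sum_coe_sort Bbad]
      exact (Equiv.sum_comp e.toEquiv (fun i => f (t ((i : ℕ)+1)) - f (t (i : ℕ)))).symm
    rw [heq]
    calc ∑ k, (f (B' k) - f (A' k)) ≤ ∑ k, ‖f (B' k) - f (A' k)‖ :=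
          Finset.sum_le_sum fun k _ => le_abs_self _
      _ ≤ ε := le_of_lt hACres
  -- put everything together
  have htel : ∑ i ∈ Finset.range n, (f (t (i+1)) - f (t i)) = f b - f a := by
    rw [Finset.sum_range_sub (fun i => f (t i)) n, h0, hn]
  have htel2 : ∑ i ∈ Finset.range n, (t (i+1) - t i) = b - a := by
    rw [Finset.sum_range_sub t n, h0, hn]
  have hsplit : ∑ i ∈ Finset.range n, (f (t (i+1)) - f (t i)) =
      ∑ i ∈ Agood, (f (t (i+1)) - f (t i)) + ∑ i ∈ Bbad, (f (t (i+1)) - f (t i)) :=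
    (Finset.sum_filter_add_sum_filter_not _ _ _).symm
  have hA2 : ∑ i ∈ Agood, (f (t (i+1)) - f (t i)) ≤ ε * (b - a) := by
    calc ∑ i ∈ Agood, (f (t (i+1)) - f (t i)) ≤ ∑ i ∈ Agood, ε * (t (i+1) - t i) :=
          Finset.sum_le_sum hAbound
      _ ≤ ∑ i ∈ Finset.range n, ε * (t (i+1) - t i) := by
          refine Finset.sum_le_sum_of_subset_of_nonneg (Finset.filter_subset _ _) ?_
          intro i hi _
          exact mul_nonneg hε.le (len_nonneg i hi)
      _ = ε * (b - a) := by rw [← Finset.mul_sum, htel2]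
  linarith [htel, hsplit, hA2, hBbound]

/-- An absolutely continuous function with a.e. nonpositive derivative is nonincreasing. -/
lemma ac_antitone {f : ℝ → ℝ} {a b : ℝ} (hab : a ≤ b)
    (hf : AbsolutelyContinuousOnSet f (Icc a b))
    (hder : ∀ᵐ t ∂(volume.restrict (Icc a b)), ∃ d ≤ 0, HasDerivAt f d t) :
    f b ≤ f a := by
  by_contra h
  push_neg at h
  have hba : (0:ℝ) ≤ b - a := by linarith
  set ε := (f b - f a) / (b - a + 2) with hε
  have hεpos : 0 < ε := by
    apply div_pos (by linarith) (by linarith)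
  have := ac_key hab hf hder hεpos
  have h2 : ε * (b - a + 2) = f b - f a := by
    rw [hε]; field_simp
  nlinarith

lemma AbsolutelyContinuousOnSet.mono {E : Type*} [NormedAddCommGroup E] {f : ℝ → E}
    {s s' : Set ℝ} (h : AbsolutelyContinuousOnSet f s) (hss : s' ⊆ s) :
    AbsolutelyContinuousOnSet f s' := by
  intro ε hε
  obtain ⟨δ, hδ, hprop⟩ := h ε hε
  exact ⟨δ, hδ, fun n a b hab => hprop n a b fun i => ⟨(hab i).1, subset_trans (hab i).2 hss⟩⟩

/-- Two-point estimate from absolute continuity. -/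
lemma AbsolutelyContinuousOnSet.two_point {E : Type*} [NormedAddCommGroup E] {f : ℝ → E}
    {s : Set ℝ} (h : AbsolutelyContinuousOnSet f s) {ε : ℝ} (hε : 0 < ε) :
    ∃ δ > (0:ℝ), ∀ u v : ℝ, u ≤ v → Icc u v ⊆ s → v - u < δ → ‖f v - f u‖ < ε := by
  obtain ⟨δ, hδ, hprop⟩ := h ε hε
  refine ⟨δ, hδ, fun u v huv hsub hlt => ?_⟩
  have := hprop 1 (fun _ => u) (fun _ => v) (fun _ => ⟨huv, hsub⟩)
    (Subsingleton.pairwise) (by simpa using hlt)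
  simpa using this

lemma AbsolutelyContinuousOnSet.continuousOn {E : Type*} [NormedAddCommGroup E] {f : ℝ → E}
    {a b : ℝ} (h : AbsolutelyContinuousOnSet f (Icc a b)) :
    ContinuousOn f (Icc a b) := by
  rw [Metric.continuousOn_iff]
  intro z hz ε hε
  obtain ⟨δ, hδ, hprop⟩ := h.two_point hε
  refine ⟨δ, hδ, fun y hy hdist => ?_⟩
  rcases le_total y z with hyz | hzy
  · have := hprop y z hyz (Icc_subset_Icc hy.1 hz.2)
      (by rw [Real.dist_eq, abs_of_nonpos (by linarith)] at hdist; linarith)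
    rw [dist_eq_norm]
    rwa [← norm_neg, neg_sub] at this
  · have := hprop z y hzy (Icc_subset_Icc hz.1 hy.2)
      (by rw [Real.dist_eq, abs_of_nonneg (by linarith)] at hdist; linarith)
    rwa [dist_eq_norm]

/-- Post-composition with a function satisfying a Lipschitz bound on the image preserves
absolute continuity. -/
lemma AbsolutelyContinuousOnSet.comp_lipschitz {E : Type*} [NormedAddCommGroup E]
    {w : ℝ → E} {J : E → ℝ} {a b : ℝ} (h : AbsolutelyContinuousOnSet w (Icc a b))
    {L : ℝ} (hL : 0 ≤ L)
    (hJ : ∀ u ∈ Icc a b, ∀ v ∈ Icc a b, |J (w u) - J (w v)| ≤ L * ‖w u - w v‖) :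
    AbsolutelyContinuousOnSet (fun t => J (w t)) (Icc a b) := by
  intro ε hε
  obtain ⟨δ, hδ, hprop⟩ := h (ε / (L + 1)) (by positivity)
  refine ⟨δ, hδ, fun n p q hpq hdisj hsum => ?_⟩
  have h1 := hprop n p q hpq hdisj hsum
  have hsub : ∀ i, p i ∈ Icc a b ∧ q i ∈ Icc a b := by
    intro i
    exact ⟨(hpq i).2 ⟨le_rfl, (hpq i).1⟩, (hpq i).2 ⟨(hpq i).1, le_rfl⟩⟩
  calc ∑ i, ‖J (w (q i)) - J (w (p i))‖ ≤ ∑ i, (L + 1) * ‖w (q i) - w (p i)‖ := by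
        apply Finset.sum_le_sum
        intro i _
        have h2 := hJ (q i) (hsub i).2 (p i) (hsub i).1
        have h3 : ‖w (q i) - w (p i)‖ ≥ 0 := norm_nonneg _
        calc ‖J (w (q i)) - J (w (p i))‖ = |J (w (q i)) - J (w (p i))| := rfl
          _ ≤ L * ‖w (q i) - w (p i)‖ := h2
          _ ≤ (L + 1) * ‖w (q i) - w (p i)‖ := by nlinarith
    _ = (L + 1) * ∑ i, ‖w (q i) - w (p i)‖ := by rw [Finset.mul_sum]
    _ < (L + 1) * (ε / (L + 1)) := by
        apply mul_lt_mul_of_pos_left h1 (by positivity)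
    _ = ε := by field_simp

/-- Rescaling an absolutely continuous curve on `[0,T]` to `[0,1]`. -/
lemma AbsolutelyContinuousOnSet.rescale {E : Type*} [NormedAddCommGroup E]
    {w : ℝ → E} {T : ℝ} (hT : 0 < T) (h : AbsolutelyContinuousOnSet w (Icc 0 T)) :
    AbsolutelyContinuousOnSet (fun s => w (T * s)) (Icc 0 1) := by
  intro ε hε
  obtain ⟨δ, hδ, hprop⟩ := h ε hε
  refine ⟨δ / T, by positivity, fun n p q hpq hdisj hsum => ?_⟩
  have key := hprop n (fun i => T * p i) (fun i => T * q i) ?_ ?_ ?_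
  · simpa using key
  · intro i
    beta_reduce
    have h1 := (hpq i).1
    have hp : p i ∈ Icc (0:ℝ) 1 := (hpq i).2 ⟨le_rfl, h1⟩
    have hq : q i ∈ Icc (0:ℝ) 1 := (hpq i).2 ⟨h1, le_rfl⟩
    constructor
    · nlinarith
    · apply Icc_subset_Icc
      · nlinarith [hp.1]
      · nlinarith [hq.2]
  · intro i j hij
    beta_reduce
    have hd : Disjoint (Ioo (p i) (q i)) (Ioo (p j) (q j)) := hdisj hij
    rw [Set.disjoint_left] at hd ⊢
    intro z hz1 hz2
    have hz1' : z / T ∈ Ioo (p i) (q i) :=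
      ⟨(lt_div_iff₀' hT).mpr hz1.1, (div_lt_iff₀' hT).mpr hz1.2⟩
    have hz2' : z / T ∈ Ioo (p j) (q j) :=
      ⟨(lt_div_iff₀' hT).mpr hz2.1, (div_lt_iff₀' hT).mpr hz2.2⟩
    exact hd hz1' hz2'
  · have : ∑ i, (T * q i - T * p i) = T * ∑ i, (q i - p i) := by
      rw [Finset.mul_sum]; congr 1; ext i; ring
    rw [this]
    calc T * ∑ i, (q i - p i) < T * (δ / T) := by
          apply mul_lt_mul_of_pos_left hsum hT
      _ = δ := by field_simp

/-- The image of a null set under multiplication by a constant is null. -/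
lemma null_image_mul {T : ℝ} (hT : T ≠ 0) {N : Set ℝ} (hN : volume N = 0) :
    volume ((fun s => T * s) '' N) = 0 := by
  have himg : (fun s => T * s) '' N = (fun t => T⁻¹ * t) ⁻¹' N := by
    ext t
    constructor
    · rintro ⟨s, hs, rfl⟩
      simpa [inv_mul_cancel_left₀ hT] using hs
    · intro ht
      exact ⟨T⁻¹ * t, ht, by field_simp⟩
  rw [himg, Real.volume_preimage_mul_left (inv_ne_zero hT), hN, mul_zero]

/-- A locally Lipschitz real-valued function satisfies a Lipschitz-type bound on any
compact set. -/
lemma locallyLipschitz_bound {E : Type*} [MetricSpace E] {J : E → ℝ}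
    (hJ : LocallyLipschitz J) {K : Set E} (hK : IsCompact K) :
    ∃ L : ℝ, 0 ≤ L ∧ ∀ u ∈ K, ∀ v ∈ K, |J u - J v| ≤ L * dist u v := by
  classical
  rcases K.eq_empty_or_nonempty with h | hne
  · exact ⟨0, le_rfl, by simp [h]⟩
  obtain ⟨M, hM⟩ : ∃ M : ℝ, ∀ u ∈ K, |J u| ≤ M := by
    obtain ⟨M, hM⟩ := (hK.image_of_continuousOn
      ((hJ.continuous).continuousOn (s := K))).isBounded.subset_closedBall 0
    exact ⟨M, fun u hu => by
      have := hM ⟨u, hu, rfl⟩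
      simpa [Real.dist_eq] using this⟩
  have key : ∀ q : E × E, q ∈ K ×ˢ K → ∃ V ∈ 𝓝 q, ∃ L : ℝ, 0 ≤ L ∧
      ∀ u v : E, (u, v) ∈ V → u ∈ K → v ∈ K → |J u - J v| ≤ L * dist u v := by
    rintro ⟨u₀, v₀⟩ _
    by_cases h : u₀ = v₀
    · subst h
      obtain ⟨C, s, hs, hls⟩ := hJ u₀
      obtain ⟨r, hr, hball⟩ := Metric.mem_nhds_iff.mp hs
      refine ⟨Metric.ball u₀ r ×ˢ Metric.ball u₀ r,
        prod_mem_nhds (Metric.ball_mem_nhds _ hr) (Metric.ball_mem_nhds _ hr),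
        C, C.coe_nonneg, ?_⟩
      rintro u v ⟨hu, hv⟩ _ _
      have := hls.dist_le_mul u (hball hu) v (hball hv)
      simpa [Real.dist_eq] using this
    · have hd : 0 < dist u₀ v₀ := dist_pos.mpr h
      have hM0 : 0 ≤ M := le_trans (abs_nonneg _) (hM _ hne.choose_spec)
      refine ⟨Metric.ball u₀ (dist u₀ v₀ / 4) ×ˢ Metric.ball v₀ (dist u₀ v₀ / 4),
        prod_mem_nhds (Metric.ball_mem_nhds _ (by linarith))
          (Metric.ball_mem_nhds _ (by linarith)), 4 * M / dist u₀ v₀,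
        by positivity, ?_⟩
      rintro u v ⟨hu, hv⟩ huK hvK
      simp only [Metric.mem_ball] at hu hv
      have h1 : dist u₀ v₀ ≤ dist u₀ u + dist u v + dist v v₀ := dist_triangle4 u₀ u v v₀
      have h2 : dist u₀ u < dist u₀ v₀ / 4 := by rwa [dist_comm] at hu
      have hdist : dist u₀ v₀ / 2 ≤ dist u v := by linarith
      have h7 : |J u - J v| ≤ 2 * M := by
        have h8 : |J u - J v| ≤ |J u| + |J v| := abs_sub _ _
        have := hM u huK; have := hM v hvK; linarith
      calc |J u - J v| ≤ 2 * M := h7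
        _ = 4 * M / dist u₀ v₀ * (dist u₀ v₀ / 2) := by field_simp; ring
        _ ≤ 4 * M / dist u₀ v₀ * dist u v := by
            apply mul_le_mul_of_nonneg_left hdist (by positivity)
  choose V hVnhds L hL0 hbound using key
  obtain ⟨t, ht⟩ := (hK.prod hK).elim_nhds_subcover' V hVnhds
  set Ltot : ℝ := ∑ q ∈ t, L q.1 q.2 with hLtot
  have hLtot0 : 0 ≤ Ltot := Finset.sum_nonneg fun q _ => hL0 q.1 q.2
  refine ⟨Ltot, hLtot0, ?_⟩
  intro u hu v hv
  have hmem : (u, v) ∈ ⋃ q ∈ t, V q.1 q.2 := ht ⟨hu, hv⟩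
  simp only [Set.mem_iUnion] at hmem
  obtain ⟨q, hq, hqV⟩ := hmem
  calc |J u - J v| ≤ L q.1 q.2 * dist u v := hbound q.1 q.2 u v hqV hu hv
    _ ≤ Ltot * dist u v := by
        apply mul_le_mul_of_nonneg_right _ dist_nonneg
        exact Finset.single_le_sum (fun q _ => hL0 q.1 q.2) hq

/-- Chain-rule transfer from `[0,1]` to `[0,T]` by rescaling. -/
lemma chain_transfer {p : ℕ} {J : EuclideanSpace ℝ (Fin p) → ℝ}
    {DJ : EuclideanSpace ℝ (Fin p) → Set (EuclideanSpace ℝ (Fin p))}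
    (hD : IsConservativeGradient J DJ) {w : ℝ → EuclideanSpace ℝ (Fin p)}
    (hac : ∀ T > (0:ℝ), AbsolutelyContinuousOnSet w (Set.Icc 0 T)) {T : ℝ} (hT : 0 < T) :
    ∀ᵐ t ∂(volume.restrict (Set.Icc (0:ℝ) T)),
      ∃ g d, HasDerivAt w g t ∧ HasDerivAt (J ∘ w) d t ∧
        ∀ v ∈ DJ (w t), d = (inner ℝ v g : ℝ) := by
  have hresc : AbsolutelyContinuousOnSet (fun s => w (T * s)) (Set.Icc 0 1) :=
    (hac T hT).rescale hT
  set γ : ℝ → EuclideanSpace ℝ (Fin p) := fun s => w (T * s) with hγdef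
  have hae := hD.2.2.2 γ hresc
  set P : ℝ → Prop := fun s => ∃ g d, HasDerivAt γ g s ∧ HasDerivAt (J ∘ γ) d s ∧
      ∀ v ∈ DJ (γ s), d = (inner ℝ v g : ℝ) with hPdef
  set Q : ℝ → Prop := fun t => ∃ g d, HasDerivAt w g t ∧ HasDerivAt (J ∘ w) d t ∧
      ∀ v ∈ DJ (w t), d = (inner ℝ v g : ℝ) with hQdef
  have hwγ : w = γ ∘ (fun t => T⁻¹ * t) := by
    funext t
    show w t = w (T * (T⁻¹ * t))
    rw [mul_inv_cancel_left₀ hT.ne']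
  have transfer : ∀ s : ℝ, P s → Q (T * s) := by
    rintro s ⟨g, d, hg, hd, hvd⟩
    have hpteq : T⁻¹ * (T * s) = s := by field_simp
    have hmul : HasDerivAt (fun t : ℝ => T⁻¹ * t) T⁻¹ (T * s) := by
      simpa using (hasDerivAt_id (T * s)).const_mul T⁻¹
    have hg' : HasDerivAt γ g (T⁻¹ * (T * s)) := by rw [hpteq]; exact hg
    have hd' : HasDerivAt (J ∘ γ) d (T⁻¹ * (T * s)) := by rw [hpteq]; exact hd
    have h1 : HasDerivAt w (T⁻¹ • g) (T * s) := by
      rw [hwγ]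
      exact hg'.scomp (T * s) hmul
    have h2 : HasDerivAt (J ∘ w) (d * T⁻¹) (T * s) := by
      have : J ∘ w = (J ∘ γ) ∘ (fun t => T⁻¹ * t) := by
        rw [hwγ]; rfl
      rw [this]
      exact hd'.comp (T * s) hmul
    refine ⟨T⁻¹ • g, d * T⁻¹, h1, h2, ?_⟩
    intro v hv
    have hveq : v ∈ DJ (γ s) := by
      rw [hγdef]
      simpa using hv
    rw [real_inner_smul_right, hvd v hveq, mul_comm]
  rw [ae_iff, Measure.restrict_apply' measurableSet_Icc]
  have hnull : volume ({s | ¬ P s} ∩ Icc (0:ℝ) 1) = 0 := by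
    have := ae_iff.mp hae
    rwa [Measure.restrict_apply' measurableSet_Icc] at this
  have hsub : {t | ¬ Q t} ∩ Icc (0:ℝ) T ⊆
      (fun s => T * s) '' ({s | ¬ P s} ∩ Icc (0:ℝ) 1) := by
    rintro t ⟨hQt, ht0, htT⟩
    refine ⟨T⁻¹ * t, ⟨?_, ?_⟩, ?_⟩
    · intro hPs
      exact hQt (by simpa [mul_inv_cancel_left₀ hT.ne'] using transfer _ hPs)
    · constructor
      · positivity
      · rw [← mul_le_mul_iff_right₀ hT, mul_one, mul_inv_cancel_left₀ hT.ne']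
        exact htT
    · exact mul_inv_cancel_left₀ hT.ne' t
  exact le_antisymm (le_trans (measure_mono hsub)
    (le_of_eq (null_image_mul hT.ne' hnull))) zero_le

end Auxiliary

/-- **Conservative gradients yield Lyapunov functions.**  If `J` is locally Lipschitz with
conservative gradient `D_J`, then `J` is a Lyapunov function for `crit D_J = {x : 0 ∈ D_J x}`
and the differential inclusion `ẇ ∈ −D_J(w)`: along every absolutely continuous solution `w`
with `w(0) = x`, one has `J(w(t)) ≤ J(x)` for all `t ≥ 0`, and `J(w(t)) < J(x)` for all
`t > 0` when `x` is not critical. -/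
theorem conservative_gradient_lyapunov
    {p : ℕ} (J : EuclideanSpace ℝ (Fin p) → ℝ) (hJ : LocallyLipschitz J)
    (DJ : EuclideanSpace ℝ (Fin p) → Set (EuclideanSpace ℝ (Fin p)))
    (hD : IsConservativeGradient J DJ) :
    ∀ x : EuclideanSpace ℝ (Fin p), ∀ w : ℝ → EuclideanSpace ℝ (Fin p),
      (∀ T > (0:ℝ), AbsolutelyContinuousOnSet w (Set.Icc 0 T)) →
      (∀ᵐ t ∂(volume.restrict (Set.Ici (0:ℝ))),
        HasDerivAt w (deriv w t) t ∧ -(deriv w t) ∈ DJ (w t)) →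
      w 0 = x →
      (∀ t ≥ (0:ℝ), J (w t) ≤ J x) ∧
      (0 ∉ DJ x → ∀ t > (0:ℝ), J (w t) < J x) := by
  intro x w hacw hdi hw0
  -- monotonicity on any `[s,t] ⊆ [0,T]`
  have mono : ∀ T > (0:ℝ), ∀ s t : ℝ, 0 ≤ s → s ≤ t → t ≤ T → J (w t) ≤ J (w s) := by
    intro T hT s t hs hst htT
    have hacT := hacw T hT
    have hcont : ContinuousOn w (Icc 0 T) := hacT.continuousOn
    have hK : IsCompact (w '' Icc 0 T) := (isCompact_Icc).image_of_continuousOn hcont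
    obtain ⟨L, hL0, hLip⟩ := locallyLipschitz_bound hJ hK
    have hJw : ∀ u ∈ Icc (0:ℝ) T, ∀ v ∈ Icc (0:ℝ) T,
        |J (w u) - J (w v)| ≤ L * ‖w u - w v‖ := by
      intro u hu v hv
      have := hLip (w u) ⟨u, hu, rfl⟩ (w v) ⟨v, hv, rfl⟩
      rwa [dist_eq_norm] at this
    have hacJ : AbsolutelyContinuousOnSet (fun τ => J (w τ)) (Icc 0 T) :=
      hacT.comp_lipschitz hL0 hJw
    have h1 := chain_transfer hD hacw hT
    have h2 : ∀ᵐ τ ∂(volume.restrict (Icc (0:ℝ) T)),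
        HasDerivAt w (deriv w τ) τ ∧ -(deriv w τ) ∈ DJ (w τ) :=
      ae_restrict_of_ae_restrict_of_subset Icc_subset_Ici_self hdi
    have hder : ∀ᵐ τ ∂(volume.restrict (Icc (0:ℝ) T)),
        ∃ d ≤ 0, HasDerivAt (fun τ => J (w τ)) d τ := by
      filter_upwards [h1, h2] with τ hτ1 hτ2
      obtain ⟨g, d, hg, hd, hvd⟩ := hτ1
      have hgd : g = deriv w τ := hg.unique hτ2.1
      have hdin : d = (inner ℝ (-(deriv w τ)) g : ℝ) := hvd _ hτ2.2
      rw [hgd] at hdin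
      have hd0 : d ≤ 0 := by
        rw [hdin, inner_neg_left]
        simpa using real_inner_self_nonneg (x := deriv w τ)
      exact ⟨d, hd0, hd⟩
    have hsubset : Icc s t ⊆ Icc (0:ℝ) T := Icc_subset_Icc hs htT
    exact ac_antitone hst (hacJ.mono hsubset)
      (ae_restrict_of_ae_restrict_of_subset hsubset hder)
  have part1 : ∀ t ≥ (0:ℝ), J (w t) ≤ J x := by
    intro t ht
    rcases eq_or_lt_of_le ht with h | h
    · rw [← h, hw0]
    · have := mono t h 0 t le_rfl h.le le_rfl
      rwa [hw0] at this
  refine ⟨part1, ?_⟩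
  intro hcrit t ht
  by_contra hcon
  have hJt : J (w t) = J x := le_antisymm (part1 t ht.le) (not_lt.mp hcon)
  -- J ∘ w is constant on [0, t]
  have hconst : ∀ s ∈ Icc (0:ℝ) t, J (w s) = J x := by
    intro s hs
    refine le_antisymm (part1 s hs.1) ?_
    have := mono t ht s t hs.1 hs.2 le_rfl
    rw [hJt] at this
    exact this
  -- a.e. points in (0, t) are critical
  have h1 := chain_transfer hD hacw ht
  have h2 : ∀ᵐ τ ∂(volume.restrict (Icc (0:ℝ) t)),
      HasDerivAt w (deriv w τ) τ ∧ -(deriv w τ) ∈ DJ (w τ) :=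
    ae_restrict_of_ae_restrict_of_subset Icc_subset_Ici_self hdi
  have hR := h1.and h2
  rw [ae_iff, Measure.restrict_apply' measurableSet_Icc] at hR
  set R : ℝ → Prop := fun τ =>
    (∃ g d, HasDerivAt w g τ ∧ HasDerivAt (J ∘ w) d τ ∧
      ∀ v ∈ DJ (w τ), d = (inner ℝ v g : ℝ)) ∧
    (HasDerivAt w (deriv w τ) τ ∧ -(deriv w τ) ∈ DJ (w τ)) with hRdef
  have hgood : ∀ τ ∈ Ioo (0:ℝ) t, R τ → 0 ∈ DJ (w τ) := by
    rintro τ hτ ⟨⟨g, d, hg, hd, hvd⟩, hw', hmem⟩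
    have hgd : g = deriv w τ := hg.unique hw'
    have hev : (J ∘ w) =ᶠ[𝓝 τ] fun _ => J x := by
      filter_upwards [Ioo_mem_nhds hτ.1 hτ.2] with y hy
      exact hconst y ⟨hy.1.le, hy.2.le⟩
    have hzero : HasDerivAt (fun _ : ℝ => J x) d τ := (hev.hasDerivAt_iff).mp hd
    have hd0 : d = 0 := hzero.unique (hasDerivAt_const τ (J x))
    have hdin : d = (inner ℝ (-(deriv w τ)) (deriv w τ) : ℝ) := by
      have h5 := hvd _ hmem
      rwa [hgd] at h5
    have hinner : (inner ℝ (deriv w τ) (deriv w τ) : ℝ) = 0 := by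
      rw [hd0, inner_neg_left] at hdin
      linarith
    have hg0 : deriv w τ = 0 := inner_self_eq_zero.mp hinner
    simpa [hg0] using hmem
  -- a sequence of critical points converging to 0
  have hseq : ∀ n : ℕ, ∃ τ, τ ∈ Ioo 0 (min t (1/(n+1):ℝ)) ∧ 0 ∈ DJ (w τ) := by
    intro n
    set ν := min t (1/(n+1):ℝ) with hν
    have hνpos : 0 < ν := lt_min ht (by positivity)
    by_contra hno
    push_neg at hno
    have hcover : Ioo (0:ℝ) ν ⊆ {τ | ¬ R τ} ∩ Icc (0:ℝ) t := by
      intro τ hτ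
      have hτt : τ ∈ Ioo (0:ℝ) t := ⟨hτ.1, lt_of_lt_of_le hτ.2 (min_le_left _ _)⟩
      refine ⟨?_, hτt.1.le, hτt.2.le⟩
      intro hRτ
      exact hno τ hτ (hgood τ hτt hRτ)
    have := measure_mono (μ := (volume : Measure ℝ)) hcover
    rw [hR, Real.volume_Ioo, sub_zero] at this
    exact ((ENNReal.ofReal_pos.mpr hνpos).not_ge this).elim
  choose τs hτs1 hτs2 using hseq
  have hτpos : ∀ n, 0 < τs n := fun n => (hτs1 n).1
  have hτle : ∀ n, τs n ≤ 1/(n+1:ℝ) :=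
    fun n => le_trans (hτs1 n).2.le (min_le_right _ _)
  have hτlet : ∀ n, τs n ≤ t := fun n => le_trans (hτs1 n).2.le (min_le_left _ _)
  have hlim : Tendsto τs atTop (𝓝 0) := by
    apply squeeze_zero (fun n => (hτpos n).le) hτle
    exact tendsto_one_div_add_atTop_nhds_zero_nat
  have hcontw : ContinuousOn w (Icc 0 t) := (hacw t ht).continuousOn
  have hwc : Tendsto (fun n => w (τs n)) atTop (𝓝 x) := by
    rw [← hw0]
    apply (hcontw 0 ⟨le_rfl, ht.le⟩).tendsto.comp
    rw [tendsto_nhdsWithin_iff]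
    exact ⟨hlim, Eventually.of_forall fun n => ⟨(hτpos n).le, hτlet n⟩⟩
  have hpair : Tendsto (fun n => (w (τs n), (0 : EuclideanSpace ℝ (Fin p))))
      atTop (𝓝 (x, 0)) := hwc.prodMk_nhds tendsto_const_nhds
  have hmem : (x, (0 : EuclideanSpace ℝ (Fin p))) ∈
      {q : EuclideanSpace ℝ (Fin p) × EuclideanSpace ℝ (Fin p) | q.2 ∈ DJ q.1} :=
    hD.2.1.mem_of_tendsto hpair (Eventually.of_forall fun n => hτs2 n)
  exact hcrit hmem

end
end

section
/- Let J : ℝ^p → ℝ be locally Lipschitz with conservative gradient D_J : ℝ^p ⇒ ℝ^p, and suppose J(x) ≥ J* for all x ∈ ℝ^p, where J* ∈ ℝ. Let w : [0,T] → ℝ^p be an absolutely continuous curve with ẇ(t) ∈ −D_J(w(t)) for almost every t. Then for every t ∈ [0,T], ‖w(t) − w(0)‖ ≤ ∫_0^t ‖ẇ(u)‖ du ≤ √(t (J(w(0)) − J*)). -/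
open MeasureTheory Filter Topology Set

noncomputable section

namespace ACAux





variable {E : Type*} [NormedAddCommGroup E]

lemma acos_mono {f : ℝ → E} {s s' : Set ℝ}
    (h : AbsolutelyContinuousOnSet f s) (hs : s' ⊆ s) : AbsolutelyContinuousOnSet f s' := by
  intro ε hε
  obtain ⟨δ, hδ, H⟩ := h ε hε
  exact ⟨δ, hδ, fun n a b hab => H n a b (fun i => ⟨(hab i).1, (hab i).2.trans hs⟩)⟩

lemma acos_single {f : ℝ → E} {s : Set ℝ}
    (h : AbsolutelyContinuousOnSet f s) {ε : ℝ} (hε : 0 < ε) :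
    ∃ δ > (0:ℝ), ∀ x y : ℝ, x ≤ y → Icc x y ⊆ s → y - x < δ → ‖f y - f x‖ < ε := by
  obtain ⟨δ, hδ, H⟩ := h ε hε
  refine ⟨δ, hδ, fun x y hxy hs hlt => ?_⟩
  have := H 1 (fun _ => x) (fun _ => y) (fun _ => ⟨hxy, hs⟩)
    (fun i j hij => absurd (Subsingleton.elim i j) hij) (by simpa using hlt)
  simpa using this

lemma acos_of_norm_le {F : Type*} [NormedAddCommGroup F] {f : ℝ → E} {g : ℝ → F} {s : Set ℝ}
    (h : AbsolutelyContinuousOnSet f s) (hle : ∀ x y, ‖g x - g y‖ ≤ ‖f x - f y‖) :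
    AbsolutelyContinuousOnSet g s := by
  intro ε hε
  obtain ⟨δ, hδ, H⟩ := h ε hε
  refine ⟨δ, hδ, fun n a b hab hd hs => ?_⟩
  exact lt_of_le_of_lt (Finset.sum_le_sum fun i _ => hle (b i) (a i)) (H n a b hab hd hs)

lemma acos_sub {f g : ℝ → E} {s : Set ℝ}
    (hf : AbsolutelyContinuousOnSet f s) (hg : AbsolutelyContinuousOnSet g s) :
    AbsolutelyContinuousOnSet (fun x => f x - g x) s := by
  intro ε hε
  obtain ⟨δ₁, hδ₁, H1⟩ := hf (ε/2) (by linarith)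
  obtain ⟨δ₂, hδ₂, H2⟩ := hg (ε/2) (by linarith)
  refine ⟨min δ₁ δ₂, lt_min hδ₁ hδ₂, fun n a b hab hd hs => ?_⟩
  have h1 := H1 n a b hab hd (hs.trans_le (min_le_left _ _))
  have h2 := H2 n a b hab hd (hs.trans_le (min_le_right _ _))
  have : ∀ i : Fin n, ‖(f (b i) - g (b i)) - (f (a i) - g (a i))‖
      ≤ ‖f (b i) - f (a i)‖ + ‖g (b i) - g (a i)‖ := by
    intro i
    have : (f (b i) - g (b i)) - (f (a i) - g (a i)) = (f (b i) - f (a i)) - (g (b i) - g (a i)) := by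
      abel
    rw [this]
    exact norm_sub_le _ _
  calc ∑ i, ‖(f (b i) - g (b i)) - (f (a i) - g (a i))‖
      ≤ ∑ i, (‖f (b i) - f (a i)‖ + ‖g (b i) - g (a i)‖) := Finset.sum_le_sum fun i _ => this i
    _ = (∑ i, ‖f (b i) - f (a i)‖) + ∑ i, ‖g (b i) - g (a i)‖ := Finset.sum_add_distrib
    _ < ε/2 + ε/2 := add_lt_add h1 h2
    _ = ε := by ring

lemma acos_continuousOn {f : ℝ → E} {a b : ℝ}
    (h : AbsolutelyContinuousOnSet f (Icc a b)) : ContinuousOn f (Icc a b) := by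
  intro x hx
  rw [Metric.continuousWithinAt_iff]
  intro ε hε
  obtain ⟨δ, hδ, H⟩ := acos_single h hε
  refine ⟨δ, hδ, fun {y} hy hdist => ?_⟩
  rcases le_total x y with hxy | hxy
  · have := H x y hxy (Icc_subset_Icc hx.1 hy.2) (by rw [Real.dist_eq, abs_of_nonneg (by linarith)] at hdist; linarith)
    rwa [dist_eq_norm]
  · have := H y x hxy (Icc_subset_Icc hy.1 hx.2) (by rw [Real.dist_eq, abs_of_nonpos (by linarith)] at hdist; linarith)
    rw [dist_eq_norm, ← norm_neg]
    simpa using this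


lemma core_nonpos {G : ℝ → ℝ} {a b : ℝ} (hab : a ≤ b)
    (hG : AbsolutelyContinuousOnSet G (Icc a b))
    {N : Set ℝ} (hN : volume N = 0)
    (hd : ∀ x ∈ Icc a b \ N, ∃ G', G' ≤ 0 ∧ HasDerivAt G G' x) :
    G b ≤ G a := by
  have key : ∀ ε > (0:ℝ), G b - G a ≤ ε * (b - a) + ε := by
    intro ε hε
    obtain ⟨δ, hδ, hAC⟩ := hG ε hε
    obtain ⟨U, hNU, hUopen, hUvol⟩ :=
      Set.exists_isOpen_lt_of_lt N (ENNReal.ofReal δ)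
        (by rw [hN]; exact ENNReal.ofReal_pos.2 hδ)
    set Q : ℝ → Prop := fun x => ∃ n : ℕ, ∃ c d : Fin n → ℝ,
      (∀ i, a ≤ c i ∧ c i ≤ d i ∧ d i ≤ x) ∧
      (∀ i, Ioo (c i) (d i) ⊆ U) ∧
      (Pairwise fun i j => Disjoint (Ioo (c i) (d i)) (Ioo (c j) (d j))) ∧
      G x - G a ≤ ε * (x - a) + ∑ i, (G (d i) - G (c i)) with hQdef
    set S : Set ℝ := {x | x ∈ Icc a b ∧ Q x} with hSdef
    have haS : a ∈ S := by
      refine ⟨⟨le_refl a, hab⟩, 0, (fun i => i.elim0), (fun i => i.elim0),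
        (fun i => i.elim0), (fun i => i.elim0), (fun i j _ => i.elim0), by simp⟩
    have hSne : S.Nonempty := ⟨a, haS⟩
    have hSbd : BddAbove S := ⟨b, fun x hx => hx.1.2⟩
    set m := sSup S with hm
    have hma : a ≤ m := le_csSup hSbd haS
    have hmb : m ≤ b := csSup_le hSne fun x hx => hx.1.2
    have near : ∀ η : ℝ, 0 < η → ∃ x, x ∈ S ∧ m - η < x ∧ x ≤ m := by
      intro η hη
      obtain ⟨x, hxS, hx⟩ := exists_lt_of_lt_csSup hSne (by linarith : m - η < m)
      exact ⟨x, hxS, hx, le_csSup hSbd hxS⟩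
    have finish : ∀ η : ℝ, 0 < η → min b (m + η) ∈ S → b ∈ S := by
      intro η hη hyS
      rcases eq_or_lt_of_le hmb with h | h
      · rw [min_eq_left (by linarith : b ≤ m + η)] at hyS
        exact hyS
      · exact absurd (le_csSup hSbd hyS) (not_le.2 (lt_min h (by linarith)))
    have hbS : b ∈ S := by
      by_cases hmN : m ∈ N
      · -- m lies in the open set U : extend family by one interval
        obtain ⟨η, hη, hball⟩ := Metric.isOpen_iff.1 hUopen m (hNU hmN)
        obtain ⟨x, hxS, hx1, hx2⟩ := near (η/2) (by linarith)
        set y := min b (m + η/2) with hy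
        have hmy : m ≤ y := le_min hmb (by linarith)
        have hxy : x ≤ y := hx2.trans hmy
        have hyb : y ≤ b := min_le_left _ _
        have hym : y ≤ m + η/2 := min_le_right _ _
        have hxIcc : x ∈ Icc a b := hxS.1
        have hIccU : Icc x y ⊆ U := by
          intro z hz
          apply hball
          rw [Metric.mem_ball, Real.dist_eq, abs_lt]
          exact ⟨by linarith [hz.1], by linarith [hz.2]⟩
        obtain ⟨n, c, d, h1, h2, h3, h4⟩ := hxS.2
        apply finish (η/2) (by linarith)
        refine ⟨⟨hxIcc.1.trans hxy, hyb⟩, n+1, Fin.snoc c x, Fin.snoc d y, ?_, ?_, ?_, ?_⟩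
        · intro i
          induction i using Fin.lastCases with
          | last => simp only [Fin.snoc_last]; exact ⟨hxIcc.1, hxy, le_refl y⟩
          | cast i => simp only [Fin.snoc_castSucc]
                      exact ⟨(h1 i).1, (h1 i).2.1, (h1 i).2.2.trans hxy⟩
        · intro i
          induction i using Fin.lastCases with
          | last => simp only [Fin.snoc_last]
                    exact fun z hz => hIccU (Ioo_subset_Icc_self hz)
          | cast i => simp only [Fin.snoc_castSucc]; exact h2 i
        · intro i j hij
          induction i using Fin.lastCases with
          | last =>
            induction j using Fin.lastCases with
            | last => exact absurd rfl hij
            | cast j =>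
              simp only [Fin.snoc_last, Fin.snoc_castSucc]
              rw [Set.disjoint_left]
              intro z hz hz'
              have := (h1 j).2.2
              have := hz.1
              have := hz'.2
              linarith
          | cast i =>
            induction j using Fin.lastCases with
            | last =>
              simp only [Fin.snoc_last, Fin.snoc_castSucc]
              rw [Set.disjoint_left]
              intro z hz hz'
              have := (h1 i).2.2
              have := hz.2
              have := hz'.1
              linarith
            | cast j =>
              simp only [Fin.snoc_castSucc]
              exact h3 (fun h => hij (congrArg Fin.castSucc h))
        · have hsum : ∑ i : Fin (n+1), (G ((Fin.snoc d y : Fin (n+1) → ℝ) i) - G ((Fin.snoc c x : Fin (n+1) → ℝ) i))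
              = (∑ i : Fin n, (G (d i) - G (c i))) + (G y - G x) := by
            rw [Fin.sum_univ_castSucc]
            simp only [Fin.snoc_castSucc, Fin.snoc_last]
          rw [hsum]
          have hmul := mul_le_mul_of_nonneg_left (by linarith : x - a ≤ y - a) hε.le
          linarith
      · -- m is a point of differentiability with nonpositive derivative
        obtain ⟨G', hG'le, hG'⟩ := hd m ⟨⟨hma, hmb⟩, hmN⟩
        have hev := (hasDerivAt_iff_isLittleO.mp hG').def hε
        obtain ⟨η, hη, hball⟩ := Metric.eventually_nhds_iff.mp hev
        have hest : ∀ z : ℝ, |z - m| < η →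
            (m ≤ z → G z - G m ≤ ε * (z - m)) ∧ (z ≤ m → G m - G z ≤ ε * (m - z)) := by
          intro z hz
          have h1 := hball (show dist z m < η by rwa [Real.dist_eq])
          rw [Real.norm_eq_abs, Real.norm_eq_abs, smul_eq_mul] at h1
          have h2 := abs_le.mp (h1.trans (le_of_eq rfl))
          constructor
          · intro hmz
            have h3 : |z - m| = z - m := abs_of_nonneg (by linarith)
            rw [h3] at h2
            nlinarith [mul_nonpos_of_nonneg_of_nonpos (by linarith : (0:ℝ) ≤ z - m) hG'le]
          · intro hzm
            have h3 : |z - m| = m - z := by rw [abs_sub_comm]; exact abs_of_nonneg (by linarith)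
            rw [h3] at h2
            nlinarith [mul_nonpos_of_nonneg_of_nonpos (by linarith : (0:ℝ) ≤ m - z) hG'le]
        obtain ⟨x, hxS, hx1, hx2⟩ := near (η/2) (by linarith)
        set y := min b (m + η/2) with hy
        have hmy : m ≤ y := le_min hmb (by linarith)
        have hxy : x ≤ y := hx2.trans hmy
        have hyb : y ≤ b := min_le_left _ _
        have hym : y ≤ m + η/2 := min_le_right _ _
        have hxIcc : x ∈ Icc a b := hxS.1
        obtain ⟨n, c, d, h1, h2, h3, h4⟩ := hxS.2
        apply finish (η/2) (by linarith)
        refine ⟨⟨hxIcc.1.trans hxy, hyb⟩, n, c, d,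
          (fun i => ⟨(h1 i).1, (h1 i).2.1, (h1 i).2.2.trans hxy⟩), h2, h3, ?_⟩
        have hup : G y - G m ≤ ε * (y - m) :=
          ((hest y (by rw [abs_of_nonneg (by linarith)]; linarith)).1) hmy
        have hdown : G m - G x ≤ ε * (m - x) :=
          ((hest x (by rw [abs_of_nonpos (by linarith)]; linarith)).2) hx2
        nlinarith [h4]
    -- use absolute continuity on the collected family
    obtain ⟨⟨_, _⟩, n, c, d, h1, h2, h3, h4⟩ := hbS
    have hlen : (∑ i, (d i - c i)) < δ := by
      have hdisj : volume (⋃ i ∈ (Finset.univ : Finset (Fin n)), Ioo (c i) (d i))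
          = ∑ i, volume (Ioo (c i) (d i)) :=
        measure_biUnion_finset (fun i _ j _ hij => h3 hij) (fun i _ => measurableSet_Ioo)
      have hsub : (⋃ i ∈ (Finset.univ : Finset (Fin n)), Ioo (c i) (d i)) ⊆ U := by
        exact Set.iUnion₂_subset fun i _ => h2 i
      have hle : (∑ i, volume (Ioo (c i) (d i))) ≤ volume U := by
        rw [← hdisj]; exact measure_mono hsub
      have heq : (∑ i, volume (Ioo (c i) (d i))) = ENNReal.ofReal (∑ i, (d i - c i)) := by
        rw [ENNReal.ofReal_sum_of_nonneg (fun i _ => by linarith [(h1 i).2.1])]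
        exact Finset.sum_congr rfl fun i _ => Real.volume_Ioo
      rw [heq] at hle
      have := hle.trans_lt hUvol
      rwa [ENNReal.ofReal_lt_ofReal_iff hδ] at this
    have hACres := hAC n c d
      (fun i => ⟨(h1 i).2.1, Icc_subset_Icc (h1 i).1 (h1 i).2.2⟩) h3 hlen
    have hsum_le : (∑ i, (G (d i) - G (c i))) ≤ ∑ i, ‖G (d i) - G (c i)‖ :=
      Finset.sum_le_sum fun i _ => by rw [Real.norm_eq_abs]; exact le_abs_self _
    linarith
  by_contra hcon
  push_neg at hcon
  have h0 : 0 < G b - G a := by linarith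
  have hbap : (0:ℝ) < b - a + 1 := by linarith
  set ε := (G b - G a) / (2 * (b - a + 1)) with hε
  have hεpos : 0 < ε := div_pos h0 (by linarith)
  have hk := key ε hεpos
  have : ε * (b - a) + ε = ε * (b - a + 1) := by ring
  rw [this, hε] at hk
  have : (G b - G a) / (2 * (b - a + 1)) * (b - a + 1) = (G b - G a) / 2 := by
    field_simp
  rw [this] at hk
  linarith


lemma ae_hasDerivAt_integral {H : ℝ → ℝ} (hH : Integrable H) (c : ℝ) :
    ∀ᵐ x ∂(volume : Measure ℝ), HasDerivAt (fun y => ∫ u in c..y, H u) (H x) x := by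
  filter_upwards [IsUnifLocDoublingMeasure.ae_tendsto_average_norm_sub volume
    hH.locallyIntegrable 1] with x hx
  rw [hasDerivAt_iff_tendsto_slope]
  have hδ : Tendsto (fun y : ℝ => |y - x| / 2) (𝓝[≠] x) (𝓝[>] 0) := by
    rw [tendsto_nhdsWithin_iff]
    constructor
    · have : Tendsto (fun y : ℝ => |y - x| / 2) (𝓝 x) (𝓝 (|x - x| / 2)) := by
        exact ((continuous_abs.comp (continuous_id.sub continuous_const)).div_const 2).tendsto x
      simpa using this.mono_left nhdsWithin_le_nhds
    · filter_upwards [self_mem_nhdsWithin] with y hy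
      have : y - x ≠ 0 := sub_ne_zero.2 hy
      have : 0 < |y - x| := abs_pos.2 this
      exact mem_Ioi.2 (by linarith)
  have hmem : ∀ᶠ y in (𝓝[≠] x), x ∈ Metric.closedBall ((x + y)/2) (1 * (|y - x|/2)) := by
    filter_upwards with y
    rw [Metric.mem_closedBall, Real.dist_eq, one_mul]
    rw [show x - (x + y)/2 = (x - y)/2 by ring, abs_div, abs_sub_comm x y]
    simp
  have hT := hx (fun y => (x + y)/2) (fun y => |y - x|/2) hδ hmem
  have hbound : ∀ᶠ y in (𝓝[≠] x), |slope (fun y => ∫ u in c..y, H u) x y - H x|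
      ≤ ⨍ u in Metric.closedBall ((x + y)/2) (|y - x|/2), ‖H u - H x‖ := by
    filter_upwards [self_mem_nhdsWithin] with y hy
    have hyx : y ≠ x := hy
    have habs : (0:ℝ) < |y - x| := abs_pos.2 (sub_ne_zero.2 hyx)
    have hint : IntervalIntegrable H volume x y := hH.intervalIntegrable
    have heq : (∫ u in c..y, H u) - ∫ u in c..x, H u = ∫ u in x..y, H u :=
      intervalIntegral.integral_interval_sub_left hH.intervalIntegrable hH.intervalIntegrable
    have hslope : slope (fun y => ∫ u in c..y, H u) x y
        = (∫ u in x..y, H u) / (y - x) := by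
      rw [slope_def_field, div_eq_div_iff (sub_ne_zero.2 hyx) (sub_ne_zero.2 hyx)]
      rw [heq]
    have hconst : (∫ u in x..y, (H u - H x)) = (∫ u in x..y, H u) - (y - x) * H x := by
      rw [intervalIntegral.integral_sub hint (intervalIntegrable_const)]
      rw [intervalIntegral.integral_const, smul_eq_mul]
    have hnum : |slope (fun y => ∫ u in c..y, H u) x y - H x|
        = |∫ u in x..y, (H u - H x)| / |y - x| := by
      rw [hslope, hconst, div_sub' (sub_ne_zero.2 hyx), abs_div]
    rw [hnum]
    have hIsub : Set.uIoc x y ⊆ Metric.closedBall ((x + y)/2) (|y - x|/2) := by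
      intro z hz
      rw [Metric.mem_closedBall, Real.dist_eq]
      rcases le_total x y with h | h
      · rw [uIoc_of_le h] at hz
        rw [abs_le]
        rw [abs_of_nonneg (by linarith : (0:ℝ) ≤ y - x)]
        constructor <;> [linarith [hz.1.le]; linarith [hz.2]]
      · rw [uIoc_of_ge h] at hz
        rw [abs_le]
        rw [abs_of_nonpos (by linarith : y - x ≤ (0:ℝ)), neg_sub]
        constructor <;> [linarith [hz.1.le]; linarith [hz.2]]
    have hIOn : IntegrableOn (fun u => ‖H u - H x‖) (Metric.closedBall ((x + y)/2) (|y - x|/2)) := by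
      exact ((hH.integrableOn).sub (integrableOn_const (by
        exact measure_closedBall_lt_top.ne))).norm
    have h1 : |∫ u in x..y, (H u - H x)| ≤ ∫ u in Set.uIoc x y, ‖H u - H x‖ := by
      rw [← Real.norm_eq_abs]
      exact intervalIntegral.norm_integral_le_integral_norm_uIoc
    have h2 : (∫ u in Set.uIoc x y, ‖H u - H x‖)
        ≤ ∫ u in Metric.closedBall ((x + y)/2) (|y - x|/2), ‖H u - H x‖ := by
      apply setIntegral_mono_set hIOn
      · filter_upwards with u using norm_nonneg _
      · exact HasSubset.Subset.eventuallyLE hIsub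
    have hvol : (volume (Metric.closedBall ((x + y)/2) (|y - x|/2))).toReal = |y - x| := by
      rw [Real.volume_closedBall, ENNReal.toReal_ofReal (by positivity)]
      ring
    rw [setAverage_eq, measureReal_def, hvol, smul_eq_mul]
    rw [div_le_iff₀ habs] at *
    · calc |∫ u in x..y, (H u - H x)| ≤ ∫ u in Set.uIoc x y, ‖H u - H x‖ := h1
        _ ≤ ∫ u in Metric.closedBall ((x + y)/2) (|y - x|/2), ‖H u - H x‖ := h2
        _ = |y - x|⁻¹ * (∫ u in Metric.closedBall ((x + y)/2) (|y - x|/2), ‖H u - H x‖) * |y - x| := by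
            field_simp
  have : Tendsto (fun y => ⨍ u in Metric.closedBall ((x + y)/2) (|y - x|/2), ‖H u - H x‖)
      (𝓝[≠] x) (𝓝 0) := hT
  rw [tendsto_iff_dist_tendsto_zero]
  apply squeeze_zero' ?_ ?_ this
  · filter_upwards with y using dist_nonneg
  · filter_upwards [hbound] with y hy
    rwa [Real.dist_eq]


lemma exists_pos_setIntegral_norm_lt {H : ℝ → ℝ} (hH : Integrable H) {ε : ℝ} (hε : 0 < ε) :
    ∃ δ > (0:ℝ), ∀ A : Set ℝ, MeasurableSet A → volume A < ENNReal.ofReal δ →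
      (∫ u in A, ‖H u‖) < ε := by
  obtain ⟨δ', hδ', hlint⟩ := exists_pos_setLIntegral_lt_of_measure_lt
    (f := fun u => (‖H u‖₊ : ENNReal)) (μ := volume) hH.2.ne
    (ε := ENNReal.ofReal ε) (ENNReal.ofReal_pos.2 hε).ne'
  refine ⟨(min δ' 1).toReal, ?_, fun A hA hAvol => ?_⟩
  · exact ENNReal.toReal_pos (lt_min hδ' one_pos).ne'
      (ne_top_of_le_ne_top ENNReal.one_ne_top (min_le_right _ _))
  · have hofReal : ENNReal.ofReal (min δ' 1).toReal = min δ' 1 :=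
      ENNReal.ofReal_toReal (by
        exact ne_top_of_le_ne_top ENNReal.one_ne_top (min_le_right _ _))
    rw [hofReal] at hAvol
    have hlt := hlint A (hAvol.trans_le (min_le_left _ _))
    have heq : (∫ u in A, ‖H u‖) = (∫⁻ u in A, (‖H u‖₊ : ENNReal)).toReal :=
      integral_norm_eq_lintegral_enorm hH.aestronglyMeasurable.restrict
    rw [heq]
    exact ENNReal.toReal_lt_of_lt_ofReal hlt

lemma acos_integral {H : ℝ → ℝ} (hH : Integrable H) (c : ℝ) (s : Set ℝ) :
    AbsolutelyContinuousOnSet (fun y => ∫ u in c..y, H u) s := by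
  intro ε hε
  obtain ⟨δ, hδ, habs⟩ := exists_pos_setIntegral_norm_lt hH hε
  refine ⟨δ, hδ, fun n a b hab hdisj hsum => ?_⟩
  have hterm : ∀ i : Fin n, ‖(∫ u in c..(b i), H u) - ∫ u in c..(a i), H u‖
      ≤ ∫ u in Ioo (a i) (b i), ‖H u‖ := by
    intro i
    rw [intervalIntegral.integral_interval_sub_left hH.intervalIntegrable hH.intervalIntegrable]
    have h1 := intervalIntegral.norm_integral_le_integral_norm_uIoc
      (f := H) (a := a i) (b := b i) (μ := volume)
    rw [uIoc_of_le (hab i).1] at h1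
    rwa [setIntegral_congr_set (Ioo_ae_eq_Ioc (a := a i) (b := b i))]
  have hsum_eq : ∑ i : Fin n, ∫ u in Ioo (a i) (b i), ‖H u‖
      = ∫ u in ⋃ i ∈ (Finset.univ : Finset (Fin n)), Ioo (a i) (b i), ‖H u‖ := by
    rw [integral_biUnion_finset Finset.univ (fun i _ => measurableSet_Ioo)
      (fun i _ j _ hij => hdisj hij) (fun i _ => hH.norm.integrableOn)]
  have hvol : volume (⋃ i ∈ (Finset.univ : Finset (Fin n)), Ioo (a i) (b i))
      < ENNReal.ofReal δ := by
    refine lt_of_le_of_lt (measure_biUnion_finset_le _ _) ?_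
    have heq : (∑ i : Fin n, volume (Ioo (a i) (b i))) = ENNReal.ofReal (∑ i, (b i - a i)) := by
      rw [ENNReal.ofReal_sum_of_nonneg (fun i _ => by linarith [(hab i).1])]
      exact Finset.sum_congr rfl fun i _ => Real.volume_Ioo
    rw [heq]
    exact ENNReal.ofReal_lt_ofReal_iff_of_nonneg (Finset.sum_nonneg fun i _ => by
      linarith [(hab i).1]) |>.2 hsum
  calc ∑ i : Fin n, ‖(∫ u in c..(b i), H u) - ∫ u in c..(a i), H u‖
      ≤ ∑ i : Fin n, ∫ u in Ioo (a i) (b i), ‖H u‖ := Finset.sum_le_sum fun i _ => hterm i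
    _ = ∫ u in ⋃ i ∈ (Finset.univ : Finset (Fin n)), Ioo (a i) (b i), ‖H u‖ := hsum_eq
    _ < ε := habs _ (MeasurableSet.biUnion (Finset.univ : Finset (Fin n)).countable_toSet
        (fun i _ => measurableSet_Ioo)) hvol

lemma sub_le_integral {g h : ℝ → ℝ} {a b : ℝ} (hab : a ≤ b)
    (hg : AbsolutelyContinuousOnSet g (Icc a b))
    (hh : Integrable ((Icc a b).indicator h))
    {N : Set ℝ} (hN : volume N = 0)
    (hd : ∀ x ∈ Icc a b \ N, ∃ g', g' ≤ h x ∧ HasDerivAt g g' x) :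
    g b - g a ≤ ∫ u in Ioc a b, h u := by
  set H := (Icc a b).indicator h with hHdef
  set ψ : ℝ → ℝ := (fun y => ∫ u in a..y, H u) with hψdef
  have hψd := ae_hasDerivAt_integral hh a
  set N' := N ∪ {x | ¬ HasDerivAt ψ (H x) x} with hN'def
  have hN' : volume N' = 0 := measure_union_null hN (ae_iff.mp hψd)
  have hGd : ∀ x ∈ Icc a b \ N', ∃ G', G' ≤ 0 ∧ HasDerivAt (fun y => g y - ψ y) G' x := by
    intro x hx
    obtain ⟨g', hg'le, hg'⟩ := hd x ⟨hx.1, fun hxN => hx.2 (Or.inl hxN)⟩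
    have hψx : HasDerivAt ψ (H x) x := by
      by_contra hc
      exact hx.2 (Or.inr hc)
    refine ⟨g' - H x, ?_, hg'.sub hψx⟩
    have hHx : H x = h x := indicator_of_mem hx.1 h
    rw [hHx]
    linarith
  have hGAC : AbsolutelyContinuousOnSet (fun y => g y - ψ y) (Icc a b) :=
    acos_sub hg (acos_integral hh a (Icc a b))
  have hcore := core_nonpos hab hGAC hN' hGd
  have hψa : ψ a = 0 := intervalIntegral.integral_same
  have hψb : ψ b = ∫ u in Ioc a b, H u := intervalIntegral.integral_of_le hab
  have hHh : (∫ u in Ioc a b, H u) = ∫ u in Ioc a b, h u :=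
    setIntegral_congr_fun measurableSet_Ioc
      (fun x hx => indicator_of_mem (Ioc_subset_Icc_self hx) h)
  have h1 : g b - ψ b ≤ g a - ψ a := hcore
  rw [hψa, hψb, hHh] at h1
  linarith

lemma norm_sub_le_integral {p : ℕ} {f : ℝ → EuclideanSpace ℝ (Fin p)} {h : ℝ → ℝ} {a b : ℝ}
    (hab : a ≤ b)
    (hf : AbsolutelyContinuousOnSet f (Icc a b))
    (hh : Integrable ((Icc a b).indicator h))
    {N : Set ℝ} (hN : volume N = 0)
    (hd : ∀ x ∈ Icc a b \ N, ∃ f', ‖f'‖ ≤ h x ∧ HasDerivAt f f' x) :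
    ‖f b - f a‖ ≤ ∫ u in Ioc a b, h u := by
  rcases eq_or_ne (f b - f a) 0 with h0 | h0
  · rw [h0, norm_zero]
    apply setIntegral_nonneg_of_ae_restrict
    have h2 : ∀ᵐ x ∂(volume.restrict (Ioc a b)), x ∉ N :=
      ae_restrict_of_ae (by rw [ae_iff]; simpa using hN)
    filter_upwards [ae_restrict_mem measurableSet_Ioc, h2] with x hx hxN
    obtain ⟨f', hf'le, _⟩ := hd x ⟨Ioc_subset_Icc_self hx, hxN⟩
    exact le_trans (norm_nonneg f') hf'le
  · set e := ‖f b - f a‖⁻¹ • (f b - f a) with he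
    have hne : ‖f b - f a‖ ≠ 0 := norm_ne_zero_iff.2 h0
    have hee : ‖e‖ = 1 := norm_smul_inv_norm h0
    set g : ℝ → ℝ := fun y => (inner ℝ e (f y) : ℝ) with hg
    have hgAC : AbsolutelyContinuousOnSet g (Icc a b) := by
      apply acos_of_norm_le hf
      intro x y
      have : g x - g y = (inner ℝ e (f x - f y) : ℝ) := by
        rw [inner_sub_right]
      rw [Real.norm_eq_abs, this]
      calc |(inner ℝ e (f x - f y) : ℝ)| ≤ ‖e‖ * ‖f x - f y‖ := abs_real_inner_le_norm e _
        _ = ‖f x - f y‖ := by rw [hee, one_mul]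
    have hgd : ∀ x ∈ Icc a b \ N, ∃ g', g' ≤ h x ∧ HasDerivAt g g' x := by
      intro x hx
      obtain ⟨f', hf'le, hf'⟩ := hd x hx
      refine ⟨(inner ℝ e f' : ℝ), ?_, ?_⟩
      · calc (inner ℝ e f' : ℝ) ≤ ‖e‖ * ‖f'‖ := real_inner_le_norm e f'
          _ = ‖f'‖ := by rw [hee, one_mul]
          _ ≤ h x := hf'le
      · have hc : HasDerivAt (fun _ : ℝ => e) 0 x := hasDerivAt_const x e
        have := hc.inner ℝ hf'
        simpa using this
    have hmain := sub_le_integral hab hgAC hh hN hgd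
    have hval : g b - g a = ‖f b - f a‖ := by
      rw [hg]
      simp only []
      rw [← inner_sub_right, he, real_inner_smul_left, real_inner_self_eq_norm_sq]
      field_simp
    linarith


lemma acos_scale {E : Type*} [NormedAddCommGroup E] {f : ℝ → E} {T : ℝ} (hT : 0 < T)
    (hf : AbsolutelyContinuousOnSet f (Icc 0 T)) :
    AbsolutelyContinuousOnSet (fun s => f (T * s)) (Icc 0 1) := by
  intro ε hε
  obtain ⟨δ, hδ, H⟩ := hf ε hε
  refine ⟨δ / T, div_pos hδ hT, fun n a b hab hdisj hsum => ?_⟩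
  have hmem : ∀ i : Fin n, 0 ≤ a i ∧ a i ≤ b i ∧ b i ≤ 1 := by
    intro i
    have h1 := (hab i).2 (left_mem_Icc.2 (hab i).1)
    have h2 := (hab i).2 (right_mem_Icc.2 (hab i).1)
    exact ⟨h1.1, (hab i).1, h2.2⟩
  have := H n (fun i => T * a i) (fun i => T * b i) ?_ ?_ ?_
  · exact this
  · intro i
    obtain ⟨h0, hab', h1⟩ := hmem i
    constructor
    · exact mul_le_mul_of_nonneg_left hab' hT.le
    · intro z hz
      have hz1 : T * a i ≤ z := hz.1
      have hz2 : z ≤ T * b i := hz.2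
      constructor
      · have : 0 ≤ T * a i := mul_nonneg hT.le h0
        linarith
      · have : T * b i ≤ T := by
          calc T * b i ≤ T * 1 := mul_le_mul_of_nonneg_left h1 hT.le
            _ = T := mul_one T
        linarith
  · intro i j hij
    have hd := hdisj hij
    refine Set.disjoint_left.2 fun z hz hz' => ?_
    have hz1 : T * a i < z := hz.1
    have hz2 : z < T * b i := hz.2
    have hz1' : T * a j < z := hz'.1
    have hz2' : z < T * b j := hz'.2
    have hzi : z / T ∈ Ioo (a i) (b i) := by
      constructor
      · rw [lt_div_iff₀ hT, mul_comm]; exact hz1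
      · rw [div_lt_iff₀ hT, mul_comm]; exact hz2
    have hzj : z / T ∈ Ioo (a j) (b j) := by
      constructor
      · rw [lt_div_iff₀ hT, mul_comm]; exact hz1'
      · rw [div_lt_iff₀ hT, mul_comm]; exact hz2'
    exact Set.disjoint_left.1 hd hzi hzj
  · have : (∑ i : Fin n, (T * b i - T * a i)) = T * ∑ i, (b i - a i) := by
      rw [Finset.mul_sum]
      exact Finset.sum_congr rfl fun i _ => by ring
    rw [this]
    calc T * ∑ i, (b i - a i) < T * (δ / T) := by
          exact mul_lt_mul_of_pos_left hsum hT
      _ = δ := by field_simp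

lemma ae_scale {T : ℝ} (hT : 0 < T) {P : ℝ → Prop}
    (h : ∀ᵐ s ∂(volume.restrict (Icc (0:ℝ) 1)), P s) :
    ∀ᵐ u ∂(volume.restrict (Icc (0:ℝ) T)), P (u / T) := by
  rw [ae_restrict_iff' measurableSet_Icc] at h ⊢
  rw [ae_iff] at h ⊢
  have hnull : volume ((· * T⁻¹) ⁻¹' {s : ℝ | ¬(s ∈ Icc (0:ℝ) 1 → P s)}) = 0 := by
    rw [Real.volume_preimage_mul_right (by positivity : T⁻¹ ≠ 0), h, mul_zero]
  refine measure_mono_null (fun u hu => ?_) hnull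
  simp only [mem_setOf_eq, mem_preimage, Classical.not_imp] at hu ⊢
  obtain ⟨huIcc, hnP⟩ := hu
  have h1 : u * T⁻¹ ∈ Icc (0:ℝ) 1 := by
    constructor
    · exact mul_nonneg huIcc.1 (by positivity)
    · rw [← div_eq_mul_inv, div_le_one hT]
      exact huIcc.2
  exact ⟨h1, by rwa [div_eq_mul_inv] at hnP⟩


end ACAux

open ACAux in
/-- **Length estimate for trajectories of the subgradient flow of a lower-bounded function.**
If `J` is locally Lipschitz with conservative gradient `D_J`, `J ≥ J*`, and `w` is an
absolutely continuous solution of `ẇ(t) ∈ −D_J(w(t))` a.e. on `[0,T]`, then for every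
`t ∈ [0,T]`, `‖w(t) − w(0)‖ ≤ ∫_0^t ‖ẇ(u)‖ du ≤ √(t (J(w(0)) − J*))`. -/
theorem length_estimate_conservative_flow
    {p : ℕ} (J : EuclideanSpace ℝ (Fin p) → ℝ) (hJ : LocallyLipschitz J)
    (DJ : EuclideanSpace ℝ (Fin p) → Set (EuclideanSpace ℝ (Fin p)))
    (hD : IsConservativeGradient J DJ)
    (Jstar : ℝ) (hlb : ∀ x, Jstar ≤ J x)
    (T : ℝ) (hT : 0 ≤ T) (w : ℝ → EuclideanSpace ℝ (Fin p))
    (hw : AbsolutelyContinuousOnSet w (Set.Icc 0 T))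
    (hsol : ∀ᵐ t ∂(volume.restrict (Set.Icc (0:ℝ) T)),
      HasDerivAt w (deriv w t) t ∧ -(deriv w t) ∈ DJ (w t)) :
    ∀ t ∈ Set.Icc (0:ℝ) T,
      ‖w t - w 0‖ ≤ ∫ u in Set.Ioc (0:ℝ) t, ‖deriv w u‖ ∧
      ∫ u in Set.Ioc (0:ℝ) t, ‖deriv w u‖ ≤ Real.sqrt (t * (J (w 0) - Jstar)) := by
  intro t ht
  rcases eq_or_lt_of_le ht.1 with ht0 | ht0
  · refine ⟨?_, ?_⟩
    · rw [← ht0]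
      simp [Set.Ioc_self]
    · rw [← ht0]
      simp [Set.Ioc_self, Real.sqrt_nonneg]
  have hTpos : 0 < T := lt_of_lt_of_le ht0 ht.2
  have hT0 : T ≠ 0 := ne_of_gt hTpos
  -- continuity and compact image
  have hwcont : ContinuousOn w (Set.Icc 0 T) := acos_continuousOn hw
  have hKcp : IsCompact (w '' Set.Icc 0 T) := isCompact_Icc.image_of_continuousOn hwcont
  -- uniform bound on the conservative gradient over the image
  obtain ⟨M, hM⟩ : ∃ M : ℝ, ∀ z ∈ w '' Set.Icc 0 T, ∀ y ∈ DJ z, ‖y‖ ≤ M := by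
    choose U hU Ms hMs using hD.2.2.1
    obtain ⟨fs, hfs⟩ := hKcp.elim_nhds_subcover' (fun z _ => U z) (fun z _ => hU z)
    refine ⟨∑ z ∈ fs, max (Ms z.1) 0, fun z hz y hy => ?_⟩
    obtain ⟨i, hi, hzU⟩ := Set.mem_iUnion₂.1 (hfs hz)
    calc ‖y‖ ≤ Ms i.1 := hMs i.1 z hzU y hy
      _ ≤ max (Ms i.1) 0 := le_max_left _ _
      _ ≤ ∑ z ∈ fs, max (Ms z.1) 0 :=
          Finset.single_le_sum (f := fun z => max (Ms z.1) 0) (fun j _ => le_max_right _ _) hi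
  have hM0 : 0 ≤ M := by
    obtain ⟨y, hy⟩ := (hD.1 (w 0)).1
    exact (norm_nonneg y).trans (hM (w 0) ⟨0, ⟨le_refl 0, hT⟩, rfl⟩ y hy)
  -- integrability of the speed and its square
  have hbd : ∀ᵐ u ∂(volume.restrict (Set.Icc (0:ℝ) T)), ‖deriv w u‖ ≤ M := by
    filter_upwards [hsol, ae_restrict_mem measurableSet_Icc] with u hu huIcc
    have h1 := hM (w u) ⟨u, huIcc, rfl⟩ _ hu.2
    simpa using h1
  have hInt1 : IntegrableOn (fun u => ‖deriv w u‖) (Set.Icc 0 T) := by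
    refine Integrable.mono' (g := fun _ => M) ?_ ?_ ?_
    · exact integrableOn_const measure_Icc_lt_top.ne
    · exact (measurable_deriv w).norm.aestronglyMeasurable
    · filter_upwards [hbd] with u hu
      rwa [Real.norm_eq_abs, abs_of_nonneg (norm_nonneg _)]
  have hInt2 : IntegrableOn (fun u => ‖deriv w u‖ ^ 2) (Set.Icc 0 T) := by
    refine Integrable.mono' (g := fun _ => M ^ 2) ?_ ?_ ?_
    · exact integrableOn_const measure_Icc_lt_top.ne
    · exact ((measurable_deriv w).norm.pow_const 2).aestronglyMeasurable
    · filter_upwards [hbd] with u hu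
      rw [Real.norm_eq_abs, abs_of_nonneg (sq_nonneg _)]
      exact pow_le_pow_left₀ (norm_nonneg _) hu 2
  -- chain rule along the flow
  have hchain : ∀ᵐ u ∂(volume.restrict (Set.Icc (0:ℝ) T)),
      HasDerivAt (fun v => J (w v)) (-(‖deriv w u‖ ^ 2)) u := by
    have hγAC : AbsolutelyContinuousOnSet (fun s => w (T * s)) (Set.Icc 0 1) :=
      acos_scale hTpos hw
    have hCR := ae_scale hTpos (hD.2.2.2 _ hγAC)
    filter_upwards [hCR, hsol] with u hu husol
    obtain ⟨g, d, hγ, hJγ, hvd⟩ := hu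
    have hTu : T * (u / T) = u := by field_simp
    have hφ : HasDerivAt (fun u' : ℝ => u' / T) (1 / T) u := by
      simpa using (hasDerivAt_id u).div_const T
    have heqw : ((fun s => w (T * s)) ∘ (fun u' : ℝ => u' / T)) = w := by
      funext v
      simp only [Function.comp_apply]
      rw [mul_comm, div_mul_cancel₀ v hT0]
    have hcomp1 : HasDerivAt w ((1 / T) • g) u := by
      have h2 := HasDerivAt.scomp (𝕜 := ℝ) u hγ hφ
      rwa [heqw] at h2
    have hder : deriv w u = (1 / T) • g := husol.1.unique hcomp1
    have hgT : T • deriv w u = g := by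
      rw [hder, smul_smul, mul_one_div, div_self hT0, one_smul]
    have hcomp2 : HasDerivAt (fun v => J (w v)) ((1 / T) * d) u := by
      have h2 := HasDerivAt.scomp (𝕜 := ℝ) u hJγ hφ
      have heqJ : ((J ∘ fun s => w (T * s)) ∘ fun u' : ℝ => u' / T) = fun v => J (w v) := by
        funext v
        simp only [Function.comp_apply]
        rw [mul_comm, div_mul_cancel₀ v hT0]
      rw [heqJ] at h2
      simpa [smul_eq_mul] using h2
    have hvDJ : -(deriv w u) ∈ DJ ((fun s => w (T * s)) (u / T)) := by
      simp only []
      rw [hTu]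
      exact husol.2
    have hdv := hvd _ hvDJ
    have hd2 : d = -(T * ‖deriv w u‖ ^ 2) := by
      rw [hdv, ← hgT, inner_neg_left, real_inner_smul_right, real_inner_self_eq_norm_sq]
      try ring
    have hfinal : (1 / T) * d = -(‖deriv w u‖ ^ 2) := by
      rw [hd2]
      field_simp
      try ring
    rwa [hfinal] at hcomp2
  -- absolute continuity of J ∘ w via local Lipschitzness
  have hJwAC : AbsolutelyContinuousOnSet (fun u => J (w u)) (Set.Icc 0 T) := by
    choose Kz tz htz hlip using hJ
    obtain ⟨fs2, hfs2⟩ := hKcp.elim_nhds_subcover' (fun z _ => interior (tz z))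
      (fun z _ => interior_mem_nhds.2 (htz z))
    set L : NNReal := fs2.sup (fun z => Kz z.1) with hL
    have hcover : (w '' Set.Icc 0 T) ⊆ ⋃ z : {x // x ∈ fs2}, interior (tz z.1.1) := by
      intro x hx
      have := hfs2 hx
      simp only [Set.mem_iUnion] at this ⊢
      obtain ⟨i, hi, h2⟩ := this
      exact ⟨⟨i, hi⟩, h2⟩
    obtain ⟨r, hr, hleb⟩ := lebesgue_number_lemma_of_metric hKcp
      (fun z => isOpen_interior) hcover
    have hunif : ∀ x y, x ∈ Set.Icc (0:ℝ) T → y ∈ Set.Icc (0:ℝ) T →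
        dist (w x) (w y) < r → |J (w x) - J (w y)| ≤ (L : ℝ) * ‖w x - w y‖ := by
      intro x y hx hy hdist
      obtain ⟨i, hball⟩ := hleb (w y) ⟨y, hy, rfl⟩
      have hwx : w x ∈ tz i.1.1 := interior_subset (hball (Metric.mem_ball.2 hdist))
      have hwy : w y ∈ tz i.1.1 := interior_subset (hball (Metric.mem_ball_self hr))
      have hlipd := (hlip i.1.1).dist_le_mul (w x) hwx (w y) hwy
      have hKL : (Kz i.1.1 : ℝ) ≤ (L : ℝ) := by
        exact_mod_cast Finset.le_sup (f := fun z => Kz z.1) i.2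
      rw [Real.dist_eq] at hlipd
      rw [dist_eq_norm] at hlipd hdist
      calc |J (w x) - J (w y)| ≤ (Kz i.1.1 : ℝ) * ‖w x - w y‖ := hlipd
        _ ≤ (L : ℝ) * ‖w x - w y‖ := mul_le_mul_of_nonneg_right hKL (norm_nonneg _)
    intro ε hε
    have hL1 : (0:ℝ) < (L : ℝ) + 1 := by positivity
    obtain ⟨δ₁, hδ₁, H1⟩ := hw (ε / ((L : ℝ) + 1)) (by positivity)
    obtain ⟨δ₂, hδ₂, H2⟩ := acos_single hw hr
    refine ⟨min δ₁ δ₂, lt_min hδ₁ hδ₂, fun n a b hab hdisj hsum => ?_⟩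
    have hterm : ∀ i : Fin n, ‖J (w (b i)) - J (w (a i))‖ ≤ (L : ℝ) * ‖w (b i) - w (a i)‖ := by
      intro i
      have hlen : b i - a i < δ₂ := by
        have h1 : b i - a i ≤ ∑ j, (b j - a j) :=
          Finset.single_le_sum (f := fun j => b j - a j)
            (fun j _ => sub_nonneg.2 (hab j).1) (Finset.mem_univ i)
        exact lt_of_le_of_lt h1 (hsum.trans_le (min_le_right _ _))
      have hwdist := H2 (a i) (b i) (hab i).1 (hab i).2 hlen
      have hai : a i ∈ Set.Icc (0:ℝ) T := (hab i).2 (Set.left_mem_Icc.2 (hab i).1)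
      have hbi : b i ∈ Set.Icc (0:ℝ) T := (hab i).2 (Set.right_mem_Icc.2 (hab i).1)
      have := hunif (b i) (a i) hbi hai (by rwa [dist_eq_norm])
      rwa [Real.norm_eq_abs]
    have hsum1 := H1 n a b hab hdisj (hsum.trans_le (min_le_left _ _))
    calc (∑ i, ‖J (w (b i)) - J (w (a i))‖)
        ≤ ∑ i, (L : ℝ) * ‖w (b i) - w (a i)‖ := Finset.sum_le_sum fun i _ => hterm i
      _ = (L : ℝ) * ∑ i, ‖w (b i) - w (a i)‖ := by rw [Finset.mul_sum]
      _ ≤ (L : ℝ) * (ε / ((L : ℝ) + 1)) :=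
          mul_le_mul_of_nonneg_left hsum1.le (NNReal.coe_nonneg L)
      _ < ε := by
          rw [mul_div_assoc']
          rw [div_lt_iff₀ hL1]
          nlinarith [NNReal.coe_nonneg L]
  -- null sets coming from the a.e. hypotheses
  set Nw := {u : ℝ | ¬(u ∈ Set.Icc (0:ℝ) T →
      (HasDerivAt w (deriv w u) u ∧ -(deriv w u) ∈ DJ (w u)))} with hNwdef
  have hNw : volume Nw = 0 := ae_iff.mp ((ae_restrict_iff' measurableSet_Icc).1 hsol)
  set NJ := {u : ℝ | ¬(u ∈ Set.Icc (0:ℝ) T →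
      HasDerivAt (fun v => J (w v)) (-(‖deriv w u‖ ^ 2)) u)} with hNJdef
  have hNJ : volume NJ = 0 := ae_iff.mp ((ae_restrict_iff' measurableSet_Icc).1 hchain)
  have htT : Set.Icc (0:ℝ) t ⊆ Set.Icc (0:ℝ) T := Set.Icc_subset_Icc (le_refl 0) ht.2
  -- first inequality
  have hIndInt1 : Integrable ((Set.Icc (0:ℝ) t).indicator (fun u => ‖deriv w u‖)) :=
    (hInt1.mono_set htT).integrable_indicator measurableSet_Icc
  have goal1 : ‖w t - w 0‖ ≤ ∫ u in Set.Ioc (0:ℝ) t, ‖deriv w u‖ := by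
    apply norm_sub_le_integral ht.1 (acos_mono hw htT) hIndInt1 hNw
    intro x hx
    have hprop := not_not.mp hx.2 (htT hx.1)
    exact ⟨deriv w x, le_refl _, hprop.1⟩
  -- energy inequality
  have hB : (∫ u in Set.Ioc (0:ℝ) t, ‖deriv w u‖ ^ 2) ≤ J (w 0) - Jstar := by
    have hIntOnNeg : IntegrableOn (fun u => -(‖deriv w u‖ ^ 2)) (Set.Icc 0 t) :=
      (hInt2.mono_set htT).neg
    have hIndInt2 : Integrable ((Set.Icc (0:ℝ) t).indicator (fun u => -(‖deriv w u‖ ^ 2))) :=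
      hIntOnNeg.integrable_indicator measurableSet_Icc
    have h2 := sub_le_integral ht.1 (acos_mono hJwAC htT) hIndInt2 hNJ
      (fun x hx => ⟨-(‖deriv w x‖ ^ 2), le_refl _, not_not.mp hx.2 (htT hx.1)⟩)
    rw [integral_neg] at h2
    have := hlb (w t)
    linarith
  -- Cauchy-Schwarz via AM-GM
  set X := ∫ u in Set.Ioc (0:ℝ) t, ‖deriv w u‖ with hXdef
  set B := ∫ u in Set.Ioc (0:ℝ) t, ‖deriv w u‖ ^ 2 with hBdef
  have hXnn : 0 ≤ X := setIntegral_nonneg measurableSet_Ioc (fun x _ => norm_nonneg _)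
  have hBnn : 0 ≤ B := setIntegral_nonneg measurableSet_Ioc (fun x _ => sq_nonneg _)
  have hIocT : Set.Ioc (0:ℝ) t ⊆ Set.Icc (0:ℝ) T := Set.Ioc_subset_Icc_self.trans htT
  have hIntOn1 : IntegrableOn (fun u => ‖deriv w u‖) (Set.Ioc 0 t) := hInt1.mono_set hIocT
  have hIntOn2 : IntegrableOn (fun u => ‖deriv w u‖ ^ 2) (Set.Ioc 0 t) := hInt2.mono_set hIocT
  have hkey : ∀ l : ℝ, 0 < l → X ≤ (l / 2) * B + (1 / (2 * l)) * t := by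
    intro l hl
    have hpt : ∀ u ∈ Set.Ioc (0:ℝ) t, ‖deriv w u‖ ≤ (l / 2) * ‖deriv w u‖ ^ 2 + 1 / (2 * l) := by
      intro u _
      have h1 : 0 ≤ (l * ‖deriv w u‖ - 1) ^ 2 / (2 * l) := div_nonneg (sq_nonneg _) (by linarith)
      have h2 : (l * ‖deriv w u‖ - 1) ^ 2 / (2 * l)
          = (l / 2) * ‖deriv w u‖ ^ 2 - ‖deriv w u‖ + 1 / (2 * l) := by
        field_simp
        ring
      rw [h2] at h1
      linarith
    have hint : X ≤ ∫ u in Set.Ioc (0:ℝ) t, ((l / 2) * ‖deriv w u‖ ^ 2 + 1 / (2 * l)) := by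
      apply setIntegral_mono_on hIntOn1 ?_ measurableSet_Ioc hpt
      exact (hIntOn2.const_mul (l / 2)).add (integrableOn_const measure_Ioc_lt_top.ne)
    have heval : (∫ u in Set.Ioc (0:ℝ) t, ((l / 2) * ‖deriv w u‖ ^ 2 + 1 / (2 * l)))
        = (l / 2) * B + (1 / (2 * l)) * t := by
      rw [integral_add (hIntOn2.const_mul (l / 2))
        (integrableOn_const measure_Ioc_lt_top.ne)]
      rw [integral_const_mul, setIntegral_const, smul_eq_mul, measureReal_def, Real.volume_Ioc,
        ENNReal.toReal_ofReal (by linarith : (0:ℝ) ≤ t - 0)]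
      ring_nf
      rfl
    rw [heval] at hint
    exact hint
  set A0 := J (w 0) - Jstar with hA0def
  have hA0 : 0 ≤ A0 := by
    have := hlb (w 0)
    simp only [hA0def]
    linarith
  rcases eq_or_lt_of_le hA0 with hA00 | hA0pos
  · have hB0 : B = 0 := le_antisymm (by rw [← hA00] at hB; exact hB) hBnn
    have hX0 : X ≤ 0 := by
      by_contra hc
      push_neg at hc
      have hl := hkey (t / X) (by positivity)
      rw [hB0, mul_zero, zero_add] at hl
      have heq2 : (1 / (2 * (t / X))) * t = X / 2 := by
        have hXne : X ≠ 0 := ne_of_gt hc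
        have htne : t ≠ 0 := ne_of_gt ht0
        field_simp
        try ring
      rw [heq2] at hl
      linarith
    exact ⟨goal1, hX0.trans (Real.sqrt_nonneg _)⟩
  · have hst : 0 < Real.sqrt t := Real.sqrt_pos.2 ht0
    have hsA : 0 < Real.sqrt A0 := Real.sqrt_pos.2 hA0pos
    set st := Real.sqrt t with hstdef
    set sA := Real.sqrt A0 with hsAdef
    have hst2 : st ^ 2 = t := Real.sq_sqrt (le_of_lt ht0)
    have hsA2 : sA ^ 2 = A0 := Real.sq_sqrt hA0pos.le
    have hl := hkey (st / sA) (by positivity)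
    have hBA' : (st / sA / 2) * B ≤ (st / sA / 2) * A0 :=
      mul_le_mul_of_nonneg_left hB (by positivity)
    have heq : (st / sA / 2) * A0 + (1 / (2 * (st / sA))) * t = st * sA := by
      rw [← hst2, ← hsA2]
      field_simp
      ring
    refine ⟨goal1, ?_⟩
    rw [Real.sqrt_mul (le_of_lt ht0)]
    calc X ≤ (st / sA / 2) * B + (1 / (2 * (st / sA))) * t := hl
      _ ≤ (st / sA / 2) * A0 + (1 / (2 * (st / sA))) * t := by linarith
      _ = st * sA := heq


end
end

section
/- Let C := {1/k : k ∈ ℤ, k ≠ 0} ∪ {0} ⊆ ℝ and let F : ℝ → ℝ be the distance function F(x) := dist(x, C). Then F is path-differentiable: its Clarke subgradient ∂ᶜF is a conservative gradient for F, i.e., for every absolutely continuous curve γ : [0,1] → ℝ and almost every t ∈ [0,1], the derivative (F∘γ)'(t) exists and equals v · γ'(t) for every v ∈ ∂ᶜF(γ(t)). -/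
open MeasureTheory Filter Topology Set

noncomputable section

/-- Clarke subgradient of a function `f : ℝ → ℝ`: the convex hull of all limits of derivatives
along sequences of differentiability points converging to `x`. -/
def clarkeSubgradient1 (f : ℝ → ℝ) (x : ℝ) : Set ℝ :=
  convexHull ℝ {v | ∃ u : ℕ → ℝ, (∀ n, DifferentiableAt ℝ f (u n)) ∧
    Tendsto u atTop (𝓝 x) ∧ Tendsto (fun n => deriv f (u n)) atTop (𝓝 v)}

/-- The closed countable set `C = {1/k : k ∈ ℤ, k ≠ 0} ∪ {0}`. -/
def Cset : Set ℝ := {x | ∃ k : ℤ, k ≠ 0 ∧ x = 1 / (k : ℝ)} ∪ {0}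

lemma zero_mem_Cset : (0:ℝ) ∈ Cset := Or.inr rfl

lemma Cset_nonempty : Cset.Nonempty := ⟨0, zero_mem_Cset⟩

lemma Cset_countable : Cset.Countable := by
  refine Set.Countable.union ?_ (Set.countable_singleton 0)
  refine Set.Countable.mono ?_ (Set.countable_range fun k : ℤ => 1/(k:ℝ))
  rintro x ⟨k, _, rfl⟩
  exact ⟨k, rfl⟩

lemma Cset_closed : IsClosed Cset := by
  rw [← isOpen_compl_iff, isOpen_iff_mem_nhds]
  intro x hx
  have hx0 : x ≠ 0 := fun h => hx (h ▸ zero_mem_Cset)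
  set ε : ℝ := |x|/2 with hε
  have hεpos : 0 < ε := by positivity
  set T : Set ℝ := Cset ∩ {y | ε ≤ |y|} with hT
  have hTfin : T.Finite := by
    have : T ⊆ (fun k : ℤ => 1/(k:ℝ)) '' (Set.Icc (-⌈1/ε⌉) ⌈1/ε⌉) := by
      rintro y ⟨hyC, hyε⟩
      have hy0 : y ≠ 0 := by
        intro h; rw [h] at hyε; simp at hyε; linarith [hyε, hεpos]
      rcases hyC with ⟨k, hk, rfl⟩ | h
      · refine ⟨k, ?_, rfl⟩
        have hk' : (k:ℝ) ≠ 0 := Int.cast_ne_zero.2 hk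
        have h1 : |1/(k:ℝ)| = 1/|(k:ℝ)| := by rw [abs_div, abs_one]
        have h2 : ε ≤ 1/|(k:ℝ)| := h1 ▸ hyε
        have hkpos : 0 < |(k:ℝ)| := abs_pos.2 hk'
        have h3 : |(k:ℝ)| ≤ 1/ε := by
          rw [le_div_iff₀ hεpos]
          have := mul_le_mul_of_nonneg_right h2 (le_of_lt hkpos)
          rw [one_div, inv_mul_cancel₀ (ne_of_gt hkpos)] at this; linarith [this]
        have h4 : ((|k| : ℤ) : ℝ) ≤ ((⌈1/ε⌉:ℤ):ℝ) := by
          rw [Int.cast_abs]; exact h3.trans (Int.le_ceil _)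
        have h5 : |k| ≤ ⌈1/ε⌉ := by exact_mod_cast h4
        rw [abs_le] at h5
        exact ⟨h5.1, h5.2⟩
      · exact absurd h hy0
    exact Set.Finite.subset ((Set.finite_Icc _ _).image _) this
  have hxT : x ∉ T := fun h => hx h.1
  have h1 : Tᶜ ∈ 𝓝 x := hTfin.isClosed.isOpen_compl.mem_nhds hxT
  have h2 : Metric.ball x ε ∈ 𝓝 x := Metric.ball_mem_nhds x hεpos
  filter_upwards [h1, h2] with y hyT hyb
  intro hyC
  apply hyT
  refine ⟨hyC, ?_⟩
  have h6 : |x - y| < ε := by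
    rw [abs_sub_comm]; rwa [Metric.mem_ball, Real.dist_eq] at hyb
  have := abs_sub_abs_le_abs_sub x y
  simp only [Set.mem_setOf_eq]
  linarith [this, h6]

lemma le_infDist' {x b : ℝ} {s : Set ℝ} (hs : s.Nonempty) (h : ∀ y ∈ s, b ≤ dist x y) :
    b ≤ Metric.infDist x s := by
  by_contra hlt
  push_neg at hlt
  obtain ⟨y, hy, hdy⟩ := (Metric.infDist_lt_iff hs).1 hlt
  exact absurd (h y hy) (not_le.2 hdy)

lemma locally_affine {x : ℝ} (hx : x ∉ Cset)
    (hu : ∀ c₁ c₂, c₁ ∈ Cset → c₂ ∈ Cset → dist x c₁ = Metric.infDist x Cset →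
      dist x c₂ = Metric.infDist x Cset → c₁ = c₂) :
    ∃ σ b : ℝ, ∀ᶠ y in 𝓝 x, Metric.infDist y Cset = σ * y + b := by
  set r := Metric.infDist x Cset with hrdef
  have hr : 0 < r := (Cset_closed.notMem_iff_infDist_pos Cset_nonempty).1 hx
  obtain ⟨c, hcC, hcd⟩ := Cset_closed.exists_infDist_eq_dist Cset_nonempty x
  have hcd' : dist x c = r := hcd.symm
  have hcx : c ≠ x := by
    intro h; rw [h, dist_self] at hcd'; linarith
  rcases lt_or_gt_of_ne hcx with hlt | hgt
  · -- c < x, c = x - r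
    have hcval : c = x - r := by
      have : |x - c| = r := by rwa [Real.dist_eq] at hcd'
      rw [abs_of_pos (by linarith)] at this
      linarith
    have hxr : x + r ∉ Cset := by
      intro hmem
      have h1 : dist x (x + r) = r := by
        rw [Real.dist_eq, abs_of_nonpos (by linarith)]; ring
      have := hu c (x + r) hcC hmem hcd' (by rw [h1])
      linarith [hcval ▸ this]
    set η := Metric.infDist (x + r) Cset with hηdef
    have hη : 0 < η := (Cset_closed.notMem_iff_infDist_pos Cset_nonempty).1 hxr
    have hgap : ∀ p ∈ Cset, p ≤ c ∨ x + r + η ≤ p := by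
      intro p hp
      by_contra hcon
      push_neg at hcon
      obtain ⟨hpc, hpη⟩ := hcon
      have hple : r ≤ dist x p := by rw [hrdef]; exact Metric.infDist_le_dist_of_mem hp
      rw [Real.dist_eq] at hple
      have hpge : x + r ≤ p := by
        rcases le_or_gt p x with hle | hgt'
        · exfalso; rw [abs_of_nonneg (by linarith)] at hple; linarith [hcval]
        · rw [abs_of_nonpos (by linarith)] at hple; linarith
      have := Metric.infDist_le_dist_of_mem (x := x + r) hp
      rw [← hηdef, Real.dist_eq, abs_of_nonpos (by linarith)] at this
      linarith
    refine ⟨1, -c, ?_⟩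
    have hδ : 0 < min (r/2) (η/4) := by positivity
    filter_upwards [Metric.ball_mem_nhds x hδ] with y hy
    rw [Metric.mem_ball, Real.dist_eq] at hy
    have hy1 : |y - x| < r/2 := lt_of_lt_of_le hy (min_le_left _ _)
    have hy2 : |y - x| < η/4 := lt_of_lt_of_le hy (min_le_right _ _)
    rw [abs_lt] at hy1 hy2
    have hyc : c < y := by rw [hcval]; linarith
    have hub : Metric.infDist y Cset ≤ y - c := by
      have := Metric.infDist_le_dist_of_mem (x := y) hcC
      rwa [Real.dist_eq, abs_of_pos (by linarith)] at this
    have hlb : y - c ≤ Metric.infDist y Cset := by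
      apply le_infDist' Cset_nonempty
      intro p hp
      rw [Real.dist_eq]
      rcases hgap p hp with h | h
      · rw [abs_of_pos (by linarith)]; linarith
      · rw [abs_of_nonpos (by linarith)]
        rw [hcval]; linarith
    have : Metric.infDist y Cset = y - c := le_antisymm hub hlb
    rw [this, one_mul]; ring
  · -- c > x, c = x + r
    have hcval : c = x + r := by
      have : |x - c| = r := by rwa [Real.dist_eq] at hcd'
      rw [abs_of_nonpos (by linarith)] at this
      linarith
    have hxr : x - r ∉ Cset := by
      intro hmem
      have h1 : dist x (x - r) = r := by
        rw [Real.dist_eq, abs_of_nonneg (by linarith)]; ring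
      have := hu c (x - r) hcC hmem hcd' (by rw [h1])
      linarith [hcval ▸ this]
    set η := Metric.infDist (x - r) Cset with hηdef
    have hη : 0 < η := (Cset_closed.notMem_iff_infDist_pos Cset_nonempty).1 hxr
    have hgap : ∀ p ∈ Cset, c ≤ p ∨ p ≤ x - r - η := by
      intro p hp
      by_contra hcon
      push_neg at hcon
      obtain ⟨hpc, hpη⟩ := hcon
      have hple : r ≤ dist x p := by rw [hrdef]; exact Metric.infDist_le_dist_of_mem hp
      rw [Real.dist_eq] at hple
      have hpge : p ≤ x - r := by
        rcases le_or_gt x p with hle | hgt'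
        · exfalso; rw [abs_of_nonpos (by linarith)] at hple; linarith [hcval]
        · rw [abs_of_nonneg (by linarith)] at hple; linarith
      have := Metric.infDist_le_dist_of_mem (x := x - r) hp
      rw [← hηdef, Real.dist_eq, abs_of_nonneg (by linarith)] at this
      linarith
    refine ⟨-1, c, ?_⟩
    have hδ : 0 < min (r/2) (η/4) := by positivity
    filter_upwards [Metric.ball_mem_nhds x hδ] with y hy
    rw [Metric.mem_ball, Real.dist_eq] at hy
    have hy1 : |y - x| < r/2 := lt_of_lt_of_le hy (min_le_left _ _)
    have hy2 : |y - x| < η/4 := lt_of_lt_of_le hy (min_le_right _ _)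
    rw [abs_lt] at hy1 hy2
    have hyc : y < c := by rw [hcval]; linarith
    have hub : Metric.infDist y Cset ≤ c - y := by
      have := Metric.infDist_le_dist_of_mem (x := y) hcC
      rw [Real.dist_eq, abs_of_nonpos (by linarith)] at this
      linarith
    have hlb : c - y ≤ Metric.infDist y Cset := by
      apply le_infDist' Cset_nonempty
      intro p hp
      rw [Real.dist_eq]
      rcases hgap p hp with h | h
      · rw [abs_of_nonpos (by linarith)]; linarith
      · rw [abs_of_nonneg (by linarith)]
        rw [hcval]; linarith
    have : Metric.infDist y Cset = c - y := le_antisymm hub hlb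
    rw [this, neg_one_mul]; ring

def BadSet : Set ℝ := {x | ¬ ∃ σ b : ℝ, ∀ᶠ y in 𝓝 x, Metric.infDist y Cset = σ * y + b}

lemma BadSet_countable : BadSet.Countable := by
  have hsub : BadSet ⊆ Cset ∪ Set.image2 (fun a b => (a + b)/2) Cset Cset := by
    intro x hx
    by_cases hxc : x ∈ Cset
    · exact Or.inl hxc
    right
    have : ¬ ∀ c₁ c₂, c₁ ∈ Cset → c₂ ∈ Cset → dist x c₁ = Metric.infDist x Cset →
        dist x c₂ = Metric.infDist x Cset → c₁ = c₂ := by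
      intro hcon
      exact hx (locally_affine hxc hcon)
    push_neg at this
    obtain ⟨c₁, c₂, h₁, h₂, hd₁, hd₂, hne⟩ := this
    refine ⟨c₁, h₁, c₂, h₂, ?_⟩
    have : |x - c₁| = |x - c₂| := by
      rw [← Real.dist_eq, ← Real.dist_eq, hd₁, hd₂]
    rcases abs_eq_abs.1 this with h | h
    · exact absurd (by linarith : c₁ = c₂) hne
    · simp only
      linarith
  exact Set.Countable.mono hsub
    (Cset_countable.union (Set.Countable.image2 Cset_countable Cset_countable _))

lemma countable_level (γ : ℝ → ℝ) (s : ℝ) :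
    {t : ℝ | γ t = s ∧ ∃ g : ℝ, g ≠ 0 ∧ HasDerivAt γ g t}.Countable := by
  set N := {t : ℝ | γ t = s ∧ ∃ g : ℝ, g ≠ 0 ∧ HasDerivAt γ g t} with hN
  have key : ∀ t ∈ N, ∃ q : ℚ × ℚ, (q.1 : ℝ) < t ∧ t < q.2 ∧
      ∀ t' ∈ N, (q.1 : ℝ) < t' → (t' : ℝ) < q.2 → t' = t := by
    rintro t ⟨hts, g, hg0, hg⟩
    have hev : ∀ᶠ z in 𝓝[≠] t, γ z ≠ γ t := hg.eventually_ne hg0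
    rw [eventually_nhdsWithin_iff] at hev
    rw [Metric.eventually_nhds_iff] at hev
    obtain ⟨ε, hε, hball⟩ := hev
    obtain ⟨q₁, hq₁, hq₁'⟩ := exists_rat_btwn (show t - ε < t by linarith)
    obtain ⟨q₂, hq₂, hq₂'⟩ := exists_rat_btwn (show t < t + ε by linarith)
    refine ⟨(q₁, q₂), hq₁', hq₂, ?_⟩
    rintro t' ⟨ht's, _⟩ h1 h2
    by_contra hne
    have hd : dist t' t < ε := by
      rw [Real.dist_eq, abs_lt]; constructor <;> [linarith; linarith]
    have := hball hd (Set.mem_compl_singleton_iff.2 hne)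
    rw [hts] at this
    exact this ht's
  choose! q hq1 hq2 hq3 using key
  have hinj : Set.InjOn q N := by
    intro t ht t' ht' hqq
    by_contra hne
    have := hq3 t' ht' t ht (hqq ▸ hq1 t ht) (hqq ▸ hq2 t ht)
    exact hne this
  exact Set.countable_of_injective_of_countable_image hinj (Set.to_countable _)


lemma ac_to_lbv {γ : ℝ → ℝ} (h : AbsolutelyContinuousOnSet γ (Set.Icc 0 1)) :
    LocallyBoundedVariationOn γ (Set.Icc (0:ℝ) 1) := by
  obtain ⟨δ, hδ, hδ'⟩ := h 1 one_pos
  have step : ∀ c d : ℝ, c ∈ Set.Icc (0:ℝ) 1 → d ∈ Set.Icc (0:ℝ) 1 → d - c < δ →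
      eVariationOn γ (Set.Icc 0 1 ∩ Set.Icc c d) ≤ 1 := by
    intro c d hc hd hcd
    apply iSup_le
    rintro ⟨n, u, hu, hus⟩
    simp only
    have husI : ∀ i, u i ∈ Set.Icc (0:ℝ) 1 := fun i => (hus i).1
    have huscd : ∀ i, u i ∈ Set.Icc c d := fun i => (hus i).2
    have hsum : ∑ i ∈ Finset.range n, edist (γ (u (i + 1))) (γ (u i)) =
        ENNReal.ofReal (∑ i ∈ Finset.range n, ‖γ (u (i+1)) - γ (u i)‖) := by
      rw [ENNReal.ofReal_sum_of_nonneg (fun i _ => norm_nonneg _)]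
      congr 1
      ext i
      rw [edist_dist, dist_eq_norm]
    rw [hsum]
    have hlt : (∑ i ∈ Finset.range n, ‖γ (u (i+1)) - γ (u i)‖) < 1 := by
      have := hδ' n (fun i : Fin n => u i) (fun i : Fin n => u (i + 1)) ?_ ?_ ?_
      · rwa [← Fin.sum_univ_eq_sum_range (fun i => ‖γ (u (i+1)) - γ (u i)‖) n]
      · intro i
        refine ⟨hu (Nat.le_succ _), ?_⟩
        exact Set.Icc_subset_Icc (husI i).1 (husI (i+1)).2
      · intro i j hij
        rcases lt_or_gt_of_ne (fun h : (i:ℕ) = (j:ℕ) => hij (Fin.ext h)) with hlt | hgt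
        · rw [Set.disjoint_left]
          intro z hz1 hz2
          have h1 : z < u ((i:ℕ) + 1) := hz1.2
          have h2 : u (j:ℕ) < z := hz2.1
          have : u ((i:ℕ)+1) ≤ u (j:ℕ) := hu hlt
          linarith
        · rw [Set.disjoint_left]
          intro z hz1 hz2
          have h1 : z < u ((j:ℕ) + 1) := hz2.2
          have h2 : u (i:ℕ) < z := hz1.1
          have : u ((j:ℕ)+1) ≤ u (i:ℕ) := hu hgt
          linarith
      · rw [Fin.sum_univ_eq_sum_range (fun i => u (i+1) - u i) n, Finset.sum_range_sub]
        have h1 : u n ≤ d := (huscd n).2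
        have h2 : c ≤ u 0 := (huscd 0).1
        linarith
    calc ENNReal.ofReal (∑ i ∈ Finset.range n, ‖γ (u (i+1)) - γ (u i)‖)
        ≤ ENNReal.ofReal 1 := ENNReal.ofReal_le_ofReal hlt.le
      _ = 1 := ENNReal.ofReal_one
  obtain ⟨M, hM⟩ := exists_nat_gt (1/δ)
  set Nn : ℕ := M + 1 with hNn
  have hNpos : 0 < (Nn:ℝ) := by positivity
  have hNδ : 1/(Nn:ℝ) < δ := by
    rw [div_lt_iff₀ hNpos]
    have h1 : 1/δ < (Nn:ℝ) := by
      rw [hNn]; push_cast; linarith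
    rw [div_lt_iff₀ hδ] at h1
    linarith
  have main : ∀ j : ℕ, j ≤ Nn →
      eVariationOn γ (Set.Icc 0 1 ∩ Set.Icc 0 ((j:ℝ)/Nn)) ≤ (j : ENNReal) := by
    intro j
    induction j with
    | zero =>
      intro _
      simp only [Nat.cast_zero, zero_div]
      refine le_trans (le_of_eq (eVariationOn.subsingleton γ ?_)) zero_le
      intro p hp q hq
      have hp0 : p = 0 := le_antisymm hp.2.2 hp.2.1
      have hq0 : q = 0 := le_antisymm hq.2.2 hq.2.1
      rw [hp0, hq0]
    | succ j ih =>
      intro hj1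
      have hj : j ≤ Nn := le_trans (Nat.le_succ j) hj1
      have hmem : (j:ℝ)/Nn ∈ Set.Icc (0:ℝ) 1 :=
        ⟨by positivity, by rw [div_le_one hNpos]; exact_mod_cast hj⟩
      have hmem' : ((j+1:ℕ):ℝ)/Nn ∈ Set.Icc (0:ℝ) 1 :=
        ⟨by positivity, by rw [div_le_one hNpos]; exact_mod_cast hj1⟩
      have h0j : (0:ℝ) ≤ (j:ℝ)/Nn := by positivity
      have hjj : (j:ℝ)/Nn ≤ ((j+1:ℕ):ℝ)/Nn := by
        have hnum : (j:ℝ) ≤ ((j+1:ℕ):ℝ) := by push_cast; linarith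
        exact (div_le_div_iff_of_pos_right hNpos).2 hnum
      rw [← eVariationOn.Icc_add_Icc γ h0j hjj hmem]
      have hlen : ((j+1:ℕ):ℝ)/Nn - (j:ℝ)/Nn < δ := by
        have : ((j+1:ℕ):ℝ)/Nn - (j:ℝ)/Nn = 1/Nn := by push_cast; ring
        rw [this]; exact hNδ
      have hstep := step ((j:ℝ)/Nn) (((j+1:ℕ):ℝ)/Nn) hmem hmem' hlen
      calc eVariationOn γ (Set.Icc 0 1 ∩ Set.Icc 0 ((j:ℝ)/Nn)) +
            eVariationOn γ (Set.Icc 0 1 ∩ Set.Icc ((j:ℝ)/Nn) (((j+1:ℕ):ℝ)/Nn))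
          ≤ (j : ENNReal) + 1 := add_le_add (ih hj) hstep
        _ = ((j+1 : ℕ) : ENNReal) := by push_cast; ring
  intro a b _ _
  have h1 : eVariationOn γ (Set.Icc (0:ℝ) 1) ≤ (Nn : ENNReal) := by
    have hh := main Nn le_rfl
    have hNN : ((Nn:ℝ)/Nn) = 1 := div_self (ne_of_gt hNpos)
    rw [hNN, Set.inter_self] at hh
    exact hh
  have h2 : eVariationOn γ (Set.Icc (0:ℝ) 1 ∩ Set.Icc a b) ≤ (Nn:ENNReal) :=
    le_trans (eVariationOn.mono γ Set.inter_subset_left) h1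
  exact ne_top_of_le_ne_top (ENNReal.natCast_ne_top Nn) h2

lemma comp_zero_deriv {γ : ℝ → ℝ} {t : ℝ} (hg : HasDerivAt γ 0 t) :
    HasDerivAt ((fun x => Metric.infDist x Cset) ∘ γ) 0 t := by
  rw [hasDerivAt_iff_isLittleO] at hg ⊢
  simp only [smul_zero, sub_zero] at hg ⊢
  refine Asymptotics.IsBigO.trans_isLittleO ?_ hg
  refine Asymptotics.IsBigO.of_bound 1 ?_
  filter_upwards with y
  rw [one_mul]
  have := (Metric.lipschitz_infDist_pt Cset).dist_le_mul (γ y) (γ t)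
  simp only [NNReal.coe_one, one_mul] at this
  simpa [Function.comp, Real.dist_eq, Real.norm_eq_abs] using this


lemma clarke_subset {x σ b : ℝ}
    (haff : ∀ᶠ y in 𝓝 x, Metric.infDist y Cset = σ * y + b) :
    clarkeSubgradient1 (fun x => Metric.infDist x Cset) x ⊆ {σ} := by
  have hS : {v | ∃ u : ℕ → ℝ, (∀ n, DifferentiableAt ℝ (fun x => Metric.infDist x Cset) (u n)) ∧
      Tendsto u atTop (𝓝 x) ∧
      Tendsto (fun n => deriv (fun x => Metric.infDist x Cset) (u n)) atTop (𝓝 v)} ⊆ {σ} := by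
    rintro v ⟨u, hud, huto, hudto⟩
    obtain ⟨U, hU_sub, hU_open, hxU⟩ := eventually_nhds_iff.1 haff
    have hev : ∀ᶠ n in atTop, u n ∈ U := huto (hU_open.mem_nhds hxU)
    have hconst : Tendsto (fun n => deriv (fun x => Metric.infDist x Cset) (u n)) atTop (𝓝 σ) := by
      refine Tendsto.congr' ?_ tendsto_const_nhds
      filter_upwards [hev] with n hn
      have haff' : (fun y => Metric.infDist y Cset) =ᶠ[𝓝 (u n)] (fun y => σ * y + b) :=
        eventually_of_mem (hU_open.mem_nhds hn) hU_sub
      have hd : HasDerivAt (fun y => σ * y + b) σ (u n) := by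
        simpa using ((hasDerivAt_id (u n)).const_mul σ).add_const b
      have := (hd.congr_of_eventuallyEq haff').deriv
      exact this.symm
    exact tendsto_nhds_unique hudto hconst
  exact convexHull_min hS (convex_singleton σ)


/-- **The distance function to `C = {1/k} ∪ {0}` is path-differentiable.**  Its Clarke
subgradient is a conservative gradient: along every absolutely continuous curve
`γ : [0,1] → ℝ`, for almost every `t`, the derivative `(F∘γ)'(t)` exists and equals
`v · γ'(t)` for every `v ∈ ∂ᶜF(γ(t))`. -/
theorem distance_to_inverse_integers_path_differentiable :
    ∀ γ : ℝ → ℝ, AbsolutelyContinuousOnSet γ (Set.Icc 0 1) →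
      ∀ᵐ t ∂(volume.restrict (Set.Icc (0:ℝ) 1)),
        ∃ g d : ℝ, HasDerivAt γ g t ∧
          HasDerivAt ((fun x => Metric.infDist x Cset) ∘ γ) d t ∧
          ∀ v ∈ clarkeSubgradient1 (fun x => Metric.infDist x Cset) (γ t), d = v * g := by
  intro γ hγ
  have hlbv := ac_to_lbv hγ
  have hae := hlbv.ae_differentiableWithinAt measurableSet_Icc
  have hIoo : ∀ᵐ t ∂(volume.restrict (Set.Icc (0:ℝ) 1)), t ∈ Set.Ioo (0:ℝ) 1 := by
    rw [ae_iff, Measure.restrict_apply' measurableSet_Icc]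
    refine measure_mono_null ?_
      (Set.Countable.measure_zero ((Set.countable_singleton (1:ℝ)).insert 0) _)
    rintro z ⟨hz1, hz2⟩
    simp only [Set.mem_setOf_eq, Set.mem_Ioo, not_and_or, not_lt] at hz1
    simp only [Set.mem_insert_iff, Set.mem_singleton_iff]
    rcases hz1 with h | h
    · exact Or.inl (le_antisymm h hz2.1)
    · exact Or.inr (le_antisymm hz2.2 h)
  have hNN : ∀ᵐ t ∂(volume.restrict (Set.Icc (0:ℝ) 1)),
      ¬ (γ t ∈ BadSet ∧ ∃ g : ℝ, g ≠ 0 ∧ HasDerivAt γ g t) := by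
    have hcnt : {t : ℝ | γ t ∈ BadSet ∧ ∃ g : ℝ, g ≠ 0 ∧ HasDerivAt γ g t}.Countable := by
      refine Set.Countable.mono ?_
        (Set.Countable.biUnion BadSet_countable (fun s _ => countable_level γ s))
      rintro t ⟨hb, hg⟩
      exact Set.mem_biUnion hb ⟨rfl, hg⟩
    have hvol := hcnt.measure_zero (volume : Measure ℝ)
    refine ae_restrict_of_ae ?_
    rw [ae_iff]
    simpa using hvol
  filter_upwards [hae, hIoo, hNN] with t hdiff htIoo hnn
  have hdAt : DifferentiableAt ℝ γ t := hdiff.differentiableAt (Icc_mem_nhds htIoo.1 htIoo.2)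
  have hg : HasDerivAt γ (deriv γ t) t := hdAt.hasDerivAt
  by_cases hb : γ t ∈ BadSet
  · have hg0 : deriv γ t = 0 := by
      by_contra h0
      exact hnn ⟨hb, deriv γ t, h0, hg⟩
    rw [hg0] at hg
    exact ⟨0, 0, hg, comp_zero_deriv hg, fun v _ => (mul_zero v).symm⟩
  · simp only [BadSet, Set.mem_setOf_eq, not_not] at hb
    obtain ⟨σ, b, haff⟩ := hb
    have hF : HasDerivAt (fun x => Metric.infDist x Cset) σ (γ t) := by
      have hd : HasDerivAt (fun y => σ * y + b) σ (γ t) := by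
        simpa using ((hasDerivAt_id (γ t)).const_mul σ).add_const b
      exact hd.congr_of_eventuallyEq haff
    refine ⟨deriv γ t, σ * deriv γ t, hg, hF.comp t hg, ?_⟩
    intro v hv
    have hvσ := clarke_subset haff hv
    rw [Set.mem_singleton_iff] at hvσ
    rw [hvσ]


end
end

section
/- Let C := {1/k : k ∈ ℤ, k ≠ 0} ∪ {0} ⊆ ℝ and let F : ℝ → ℝ be the distance function F(x) := dist(x, C). Then the Clarke subgradient of F fails the semismoothness property at 0: for every k ∈ ℕ with k ≥ 1, one has −1 ∈ ∂ᶜF(1/k) and (F(1/k) − F(0) − (−1)·(1/k − 0))/|1/k − 0| = 1; consequently limsup_{y → 0, g ∈ ∂ᶜF(y)} (F(y) − F(0) − g·(y−0))/|y−0| ≥ 1, so ∂ᶜF is not a generalized gradient of F in the sense of Norkin, and F is not differentiable in the generalized sense. -/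
open MeasureTheory Filter Topology Set

noncomputable section

/-- `D` is a generalized gradient of `f : ℝ → ℝ` in the sense of Norkin: `D` is locally
bounded, upper semicontinuous, with nonempty compact convex values, and satisfies the
semismoothness property `limsup_{y → x, g ∈ D(y)} (f(y) − f(x) − g·(y−x))/|y−x| = 0`. -/
def IsNorkinGradient1 (f : ℝ → ℝ) (D : ℝ → Set ℝ) : Prop :=
  (∀ x, (D x).Nonempty ∧ IsCompact (D x) ∧ Convex ℝ (D x)) ∧
  (∀ x, ∃ U ∈ 𝓝 x, ∃ M : ℝ, ∀ z ∈ U, ∀ g ∈ D z, |g| ≤ M) ∧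
  (∀ x, ∀ V : Set ℝ, IsOpen V → D x ⊆ V → ∀ᶠ y in 𝓝 x, D y ⊆ V) ∧
  (∀ x : ℝ, Filter.limsup
    (fun y => sSup ((fun g => (f y - f x - g * (y - x)) / |y - x|) '' D y)) (𝓝[≠] x) = 0)

/-- The distance function to `Cset`. -/
def distC (x : ℝ) : ℝ := Metric.infDist x Cset

/-! ### Auxiliary lemmas -/

lemma one_div_nat_mem_Cset {k : ℕ} (hk : 1 ≤ k) : (1 / (k:ℝ)) ∈ Cset := by
  left
  exact ⟨(k:ℤ), by exact_mod_cast Nat.one_le_iff_ne_zero.1 hk, by push_cast; ring⟩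

lemma distC_zero : distC 0 = 0 := Metric.infDist_zero_of_mem zero_mem_Cset

lemma distC_one_div {k : ℕ} (hk : 1 ≤ k) : distC (1 / (k:ℝ)) = 0 :=
  Metric.infDist_zero_of_mem (one_div_nat_mem_Cset hk)

lemma distC_lip : LipschitzWith 1 distC := Metric.lipschitz_infDist_pt Cset

/-- Every element of `Cset` is either `≤ 1/(k+1)` or `≥ 1/k`. -/
lemma Cset_gap {k : ℕ} (hk : 1 ≤ k) {c : ℝ} (hc : c ∈ Cset) :
    c ≤ 1 / ((k:ℝ) + 1) ∨ 1 / (k:ℝ) ≤ c := by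
  have hk0 : (0:ℝ) < (k:ℝ) := by exact_mod_cast hk
  have hk1 : (0:ℝ) < (k:ℝ) + 1 := by linarith
  rcases hc with ⟨j, hj0, rfl⟩ | hc
  · rcases lt_trichotomy j 0 with hj | hj | hj
    · left
      have : (1:ℝ) / (j:ℝ) ≤ 0 := by
        apply div_nonpos_of_nonneg_of_nonpos zero_le_one
        exact_mod_cast hj.le
      exact this.trans (by positivity)
    · exact absurd hj hj0
    · rcases le_or_gt j (k:ℤ) with hjk | hjk
      · right
        apply one_div_le_one_div_of_le
        · exact_mod_cast hj
        · exact_mod_cast hjk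
      · left
        apply one_div_le_one_div_of_le hk1
        have : (k:ℤ) + 1 ≤ j := hjk
        exact_mod_cast this
  · left
    rw [mem_singleton_iff] at hc
    rw [hc]; positivity

/-- On the right half of the gap `(1/(k+1), 1/k)`, `distC y = 1/k - y`. -/
lemma distC_eq_on_gap {k : ℕ} (hk : 1 ≤ k) {y : ℝ}
    (hy : y ∈ Ioo ((1/(k:ℝ) + 1/((k:ℝ)+1))/2) (1/(k:ℝ))) :
    distC y = 1/(k:ℝ) - y := by
  obtain ⟨hy1, hy2⟩ := hy
  have hk0 : (0:ℝ) < (k:ℝ) := by exact_mod_cast hk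
  have ha : (0:ℝ) < 1 / ((k:ℝ)+1) := by positivity
  have hab : 1 / ((k:ℝ)+1) < 1/(k:ℝ) := by
    apply one_div_lt_one_div_of_lt hk0; linarith
  apply le_antisymm
  · calc distC y ≤ dist y (1/(k:ℝ)) := Metric.infDist_le_dist_of_mem (one_div_nat_mem_Cset hk)
    _ = 1/(k:ℝ) - y := by rw [Real.dist_eq, abs_of_nonpos (by linarith)]; ring
  · refine le_of_not_gt fun h => ?_
    obtain ⟨c, hc, hdc⟩ := (Metric.infDist_lt_iff ⟨0, zero_mem_Cset⟩).1 h
    rw [Real.dist_eq] at hdc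
    rcases Cset_gap hk hc with h1 | h1
    · have : y - c ≤ |y - c| := le_abs_self _
      linarith
    · have : -(y - c) ≤ |y - c| := neg_le_abs _
      linarith

lemma distC_hasDeriv_on_gap {k : ℕ} (hk : 1 ≤ k) {y : ℝ}
    (hy : y ∈ Ioo ((1/(k:ℝ) + 1/((k:ℝ)+1))/2) (1/(k:ℝ))) :
    HasDerivAt distC (-1) y := by
  have hev : distC =ᶠ[𝓝 y] fun z => 1/(k:ℝ) - z := by
    filter_upwards [isOpen_Ioo.mem_nhds hy] with z hz
    exact distC_eq_on_gap hk hz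
  have : HasDerivAt (fun z : ℝ => 1/(k:ℝ) - z) (-1) y := by
    exact (hasDerivAt_id' y).const_sub (1/(k:ℝ))
  exact this.congr_of_eventuallyEq hev

/-- deriv of a 1-Lipschitz function lies in [-1,1]. -/
lemma deriv_mem_Icc_of_lip {f : ℝ → ℝ} (hf : LipschitzWith 1 f) (x : ℝ) :
    deriv f x ∈ Icc (-1 : ℝ) 1 := by
  by_cases hd : DifferentiableAt ℝ f x
  · have h := hd.hasDerivAt
    rw [hasDerivAt_iff_tendsto_slope] at h
    have hb : ∀ y ∈ ({x}ᶜ : Set ℝ), slope f x y ∈ Icc (-1:ℝ) 1 := by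
      intro y hy
      have hxy : y ≠ x := hy
      have := hf.dist_le_mul y x
      rw [Real.dist_eq, Real.dist_eq] at this
      rw [mem_Icc, ← abs_le, slope_def_field, abs_div]
      have hpos : 0 < |y - x| := abs_pos.2 (sub_ne_zero.2 hxy)
      rw [div_le_one hpos]
      simpa using this
    have : ∀ᶠ y in 𝓝[≠] x, slope f x y ∈ Icc (-1:ℝ) 1 :=
      eventually_nhdsWithin_of_forall hb
    exact isClosed_Icc.mem_of_tendsto h this
  · simp [deriv_zero_of_not_differentiableAt hd]

lemma clarke_subset_Icc {f : ℝ → ℝ} (hf : LipschitzWith 1 f) (x : ℝ) :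
    clarkeSubgradient1 f x ⊆ Icc (-1 : ℝ) 1 := by
  apply convexHull_min _ (convex_Icc _ _)
  rintro v ⟨u, hdiff, -, hconv⟩
  exact isClosed_Icc.mem_of_tendsto hconv
    (Eventually.of_forall fun n => deriv_mem_Icc_of_lip hf (u n))

/-- `-1` is a Clarke subgradient of `distC` at `1/k`. -/
lemma neg_one_mem_clarke {k : ℕ} (hk : 1 ≤ k) :
    (-1:ℝ) ∈ clarkeSubgradient1 distC (1/(k:ℝ)) := by
  apply subset_convexHull
  have hk0 : (0:ℝ) < (k:ℝ) := by exact_mod_cast hk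
  set b : ℝ := 1/(k:ℝ) with hb
  set m : ℝ := (1/(k:ℝ) + 1/((k:ℝ)+1))/2 with hm
  have hab : 1 / ((k:ℝ)+1) < 1/(k:ℝ) := by
    apply one_div_lt_one_div_of_lt hk0; linarith
  have hmb : m < b := by rw [hm, hb]; linarith
  set d : ℝ := b - m with hd'
  have hd : 0 < d := sub_pos.2 hmb
  have hmem : ∀ n : ℕ, b - d/((n:ℝ)+2) ∈ Ioo m b := by
    intro n
    have hn0 : (0:ℝ) ≤ (n:ℝ) := Nat.cast_nonneg n
    have h2 : (0:ℝ) < (n:ℝ)+2 := by linarith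
    have h3 : d/((n:ℝ)+2) ≤ d/2 :=
      div_le_div_of_nonneg_left hd.le (by norm_num) (by linarith)
    have h4 : 0 < d/((n:ℝ)+2) := by positivity
    constructor
    · have : m = b - d := by rw [hd']; ring
      rw [this]; linarith
    · linarith
  refine ⟨fun n => b - d/((n:ℝ)+2), fun n => (distC_hasDeriv_on_gap hk (hmem n)).differentiableAt,
    ?_, ?_⟩
  · have hz : Tendsto (fun n : ℕ => d/((n:ℝ)+2)) atTop (𝓝 0) :=
      tendsto_const_nhds.div_atTop
        (tendsto_atTop_add_const_right _ 2 tendsto_natCast_atTop_atTop)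
    simpa using tendsto_const_nhds.sub hz
  · have hder : ∀ n : ℕ, deriv distC (b - d/((n:ℝ)+2)) = -1 :=
      fun n => (distC_hasDeriv_on_gap hk (hmem n)).deriv
    simp only [hder]
    exact tendsto_const_nhds

/-- The difference quotient of `distC` at `0` evaluated at `y = 1/k`, `g = -1`, equals `1`. -/
lemma quot_at_zero {k : ℕ} (hk : 1 ≤ k) :
    (distC (1/(k:ℝ)) - distC 0 - (-1) * ((1:ℝ)/(k:ℝ) - 0)) / |(1:ℝ)/(k:ℝ) - 0| = 1 := by
  have hk0 : (0:ℝ) < (k:ℝ) := by exact_mod_cast hk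
  have hb : (0:ℝ) < 1/(k:ℝ) := by positivity
  rw [distC_one_div hk, distC_zero, sub_zero, sub_zero, abs_of_pos hb]
  field_simp
  ring

/-- A uniform upper bound on difference quotients of `distC` when `|g| ≤ M`. -/
lemma quot_le {x y g M : ℝ} (hg : |g| ≤ M) :
    (distC y - distC x - g * (y - x)) / |y - x| ≤ 1 + M := by
  have hM : 0 ≤ M := (abs_nonneg g).trans hg
  rcases eq_or_ne y x with rfl | h
  · simp only [sub_self, mul_zero, sub_zero, abs_zero, div_zero]
    linarith
  · have hpos : 0 < |y - x| := abs_pos.2 (sub_ne_zero.2 h)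
    rw [div_le_iff₀ hpos]
    have h1 : |distC y - distC x| ≤ |y - x| := by
      have := distC_lip.dist_le_mul y x
      simpa [Real.dist_eq] using this
    have h2 : |g * (y - x)| ≤ M * |y - x| := by
      rw [abs_mul]; exact mul_le_mul_of_nonneg_right hg (abs_nonneg _)
    calc distC y - distC x - g * (y - x) ≤ |distC y - distC x| + |g * (y - x)| := by
          have ha := le_abs_self (distC y - distC x)
          have hb := neg_abs_le (g * (y - x))
          linarith
    _ ≤ |y - x| + M * |y - x| := add_le_add h1 h2
    _ = (1 + M) * |y - x| := by ring

/-- **Failure of semismoothness for the distance to `C = {1/k} ∪ {0}` at `0`.**  For every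
`k ≥ 1` one has `−1 ∈ ∂ᶜF(1/k)` and the corresponding difference quotient equals `1`;
consequently the limsup in the semismoothness property at `0` is at least `1`, `∂ᶜF` is not a
generalized gradient of `F` in the sense of Norkin, and `F` is not differentiable in the
generalized sense. -/
theorem distance_to_inverse_integers_not_norkin :
    (∀ k : ℕ, 1 ≤ k → (-1 : ℝ) ∈ clarkeSubgradient1 distC (1 / k) ∧
      (distC (1 / k) - distC 0 - (-1) * ((1:ℝ) / k - 0)) / |(1:ℝ) / k - 0| = 1) ∧
    (1:ℝ) ≤ Filter.limsup
      (fun y => sSup ((fun g => (distC y - distC 0 - g * (y - 0)) / |y - 0|) ''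
        clarkeSubgradient1 distC y)) (𝓝[≠] (0:ℝ)) ∧
    ¬ IsNorkinGradient1 distC (clarkeSubgradient1 distC) ∧
    ¬ ∃ D : ℝ → Set ℝ, IsNorkinGradient1 distC D := by
  have part1 : ∀ k : ℕ, 1 ≤ k → (-1 : ℝ) ∈ clarkeSubgradient1 distC (1 / k) ∧
      (distC (1 / k) - distC 0 - (-1) * ((1:ℝ) / k - 0)) / |(1:ℝ) / k - 0| = 1 :=
    fun k hk => ⟨neg_one_mem_clarke hk, quot_at_zero hk⟩
  -- bound on the Clarke difference quotients at 0
  have hbound : ∀ y : ℝ,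
      sSup ((fun g => (distC y - distC 0 - g * (y - 0)) / |y - 0|) ''
        clarkeSubgradient1 distC y) ≤ 2 := by
    intro y
    apply Real.sSup_le _ (by norm_num)
    rintro v ⟨g, hg, rfl⟩
    have hg1 : |g| ≤ 1 := by
      have h := clarke_subset_Icc distC_lip y hg
      exact abs_le.2 ⟨h.1, h.2⟩
    have := quot_le (x := 0) (y := y) hg1
    linarith
  have hbddimg : ∀ y : ℝ, BddAbove
      ((fun g => (distC y - distC 0 - g * (y - 0)) / |y - 0|) '' clarkeSubgradient1 distC y) := by
    intro y
    refine ⟨2, ?_⟩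
    rintro v ⟨g, hg, rfl⟩
    have hg1 : |g| ≤ 1 := by
      have h := clarke_subset_Icc distC_lip y hg
      exact abs_le.2 ⟨h.1, h.2⟩
    have := quot_le (x := 0) (y := y) hg1
    linarith
  have part2 : (1:ℝ) ≤ Filter.limsup
      (fun y => sSup ((fun g => (distC y - distC 0 - g * (y - 0)) / |y - 0|) ''
        clarkeSubgradient1 distC y)) (𝓝[≠] (0:ℝ)) := by
    apply le_limsup_of_frequently_le
    · -- frequently ≥ 1
      have hseq : Tendsto (fun n : ℕ => 1/((n:ℝ)+1)) atTop (𝓝[≠] (0:ℝ)) := by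
        apply tendsto_nhdsWithin_of_tendsto_nhds_of_eventually_within
        · exact tendsto_const_nhds.div_atTop
            (tendsto_atTop_add_const_right _ 1 tendsto_natCast_atTop_atTop)
        · refine Eventually.of_forall fun n => ?_
          have : (0:ℝ) < 1/((n:ℝ)+1) := by positivity
          exact this.ne'
      apply hseq.frequently
      apply Filter.Eventually.frequently
      refine Eventually.of_forall fun n => ?_
      have hk : 1 ≤ n + 1 := Nat.le_add_left 1 n
      have hcast : ((n+1:ℕ):ℝ) = (n:ℝ)+1 := by push_cast; ring
      have hmem : (1:ℝ) ∈ (fun g => (distC (1/((n:ℝ)+1)) - distC 0 -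
          g * (1/((n:ℝ)+1) - 0)) / |1/((n:ℝ)+1) - 0|) '' clarkeSubgradient1 distC (1/((n:ℝ)+1)) := by
        refine ⟨-1, ?_, ?_⟩
        · have := neg_one_mem_clarke hk
          rwa [hcast] at this
        · have := quot_at_zero hk
          rwa [hcast] at this
      exact le_csSup (hbddimg _) hmem
    · exact ⟨2, Filter.eventually_map.2 (Eventually.of_forall hbound)⟩
  refine ⟨part1, part2, ?_, ?_⟩
  · intro h
    have h0 := h.2.2.2 0
    rw [h0] at part2
    linarith
  · rintro ⟨D, hvals, hbdd, -, hsemi⟩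
    -- boundedness of the quotient sup near any point
    have hBU : ∀ x : ℝ, (𝓝[≠] x).IsBoundedUnder (· ≤ ·)
        (fun y => sSup ((fun g => (distC y - distC x - g * (y - x)) / |y - x|) '' D y)) := by
      intro x
      obtain ⟨U, hU, M, hM⟩ := hbdd x
      refine ⟨1 + M, Filter.eventually_map.2 ?_⟩
      filter_upwards [mem_nhdsWithin_of_mem_nhds hU] with y hyU
      apply Real.sSup_le
      · rintro v ⟨g, hg, rfl⟩
        exact quot_le (hM y hyU g hg)
      · obtain ⟨g₀, hg₀⟩ := (hvals y).1
        have : 0 ≤ M := (abs_nonneg g₀).trans (hM y hyU g₀ hg₀)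
        linarith
    have hev0 : ∀ᶠ y in 𝓝[≠] (0:ℝ),
        sSup ((fun g => (distC y - distC 0 - g * (y - 0)) / |y - 0|) '' D y) < 1/2 := by
      have hlt : Filter.limsup
          (fun y => sSup ((fun g => (distC y - distC 0 - g * (y - 0)) / |y - 0|) '' D y))
          (𝓝[≠] (0:ℝ)) < 1/2 := by rw [hsemi 0]; norm_num
      exact eventually_lt_of_limsup_lt hlt (hBU 0)
    have hDbddimg : ∀ (y x : ℝ), BddAbove
        ((fun g => (distC y - distC x - g * (y - x)) / |y - x|) '' D y) := by
      intro y x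
      have hcont : Continuous fun g : ℝ => (distC y - distC x - g * (y - x)) / |y - x| :=
        ((continuous_const.sub (continuous_mul_right _)).div_const _)
      exact ((hvals y).2.1.image hcont).bddAbove
    have hfreq : ∃ᶠ y in 𝓝[≠] (0:ℝ),
        (1:ℝ)/2 ≤ sSup ((fun g => (distC y - distC 0 - g * (y - 0)) / |y - 0|) '' D y) := by
      rw [Filter.frequently_iff]
      intro W hW
      rw [Metric.mem_nhdsWithin_iff] at hW
      obtain ⟨r, hr, hball⟩ := hW
      obtain ⟨n, hn⟩ := exists_nat_one_div_lt hr
      set k : ℕ := n + 1 with hkdef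
      have hk : 1 ≤ k := Nat.le_add_left 1 n
      have hk0 : (0:ℝ) < (k:ℝ) := by exact_mod_cast hk
      have hcast : ((k:ℕ):ℝ) = (n:ℝ)+1 := by rw [hkdef]; push_cast; ring
      set b : ℝ := 1/(k:ℝ) with hbdef
      have hbr : b < r := by rw [hbdef, hcast]; exact hn
      set m : ℝ := (1/(k:ℝ) + 1/((k:ℝ)+1))/2 with hmdef
      have ha0 : (0:ℝ) < 1/((k:ℝ)+1) := by positivity
      have hab : 1/((k:ℝ)+1) < 1/(k:ℝ) := by
        apply one_div_lt_one_div_of_lt hk0; linarith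
      have hm0 : 0 < m := by rw [hmdef]; positivity
      have hmb : m < b := by rw [hmdef, hbdef]; linarith
      -- eventually near b the sup is < 1/2
      have hevk : ∀ᶠ y in 𝓝[≠] b,
          sSup ((fun g => (distC y - distC b - g * (y - b)) / |y - b|) '' D y) < 1/2 := by
        have hlt : Filter.limsup
            (fun y => sSup ((fun g => (distC y - distC b - g * (y - b)) / |y - b|) '' D y))
            (𝓝[≠] b) < 1/2 := by rw [hsemi b]; norm_num
        exact eventually_lt_of_limsup_lt hlt (hBU b)
      have hle : 𝓝[<] b ≤ 𝓝[≠] b :=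
        nhdsWithin_mono b fun z hz => (ne_of_lt hz : z ≠ b)
      have hIoo : Ioo m b ∈ 𝓝[<] b := Ioo_mem_nhdsLT_of_mem ⟨hmb, le_refl b⟩
      have hboth : ∀ᶠ y in 𝓝[<] b,
          sSup ((fun g => (distC y - distC b - g * (y - b)) / |y - b|) '' D y) < 1/2 ∧
          y ∈ Ioo m b := (hevk.filter_mono hle).and hIoo
      obtain ⟨y, hylt, hyIoo⟩ := hboth.exists
      have hy0 : 0 < y := lt_trans hm0 hyIoo.1
      have hyb : y < b := hyIoo.2
      obtain ⟨g₀, hg₀⟩ := (hvals y).1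
      -- quotient at b equals 1 + g₀
      have hdy : distC y = b - y := distC_eq_on_gap hk hyIoo
      have hdb : distC b = 0 := distC_one_div hk
      have hq1 : (distC y - distC b - g₀ * (y - b)) / |y - b| = 1 + g₀ := by
        have hne : b - y ≠ 0 := by linarith
        rw [hdy, hdb, abs_of_neg (by linarith : y - b < 0), neg_sub,
          show b - y - 0 - g₀ * (y - b) = (1 + g₀) * (b - y) by ring,
          mul_div_assoc, div_self hne, mul_one]
      have hle1 : 1 + g₀ ≤ sSup ((fun g => (distC y - distC b - g * (y - b)) / |y - b|) '' D y) :=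
        le_csSup (hDbddimg y b) ⟨g₀, hg₀, hq1⟩
      have hg₀lt : g₀ < -(1/2) := by linarith
      -- quotient at 0
      have hq0 : (distC y - distC 0 - g₀ * (y - 0)) / |y - 0| = (b - y)/y - g₀ := by
        rw [hdy, distC_zero, sub_zero, sub_zero, abs_of_pos hy0,
          show b - y - g₀ * y = (b - y) - g₀ * y by ring, sub_div,
          mul_div_cancel_right₀ g₀ hy0.ne']
      have hge : (1:ℝ)/2 ≤ (b - y)/y - g₀ := by
        have : 0 ≤ (b - y)/y := div_nonneg (by linarith) hy0.le
        linarith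
      have hle0 : (b - y)/y - g₀ ≤
          sSup ((fun g => (distC y - distC 0 - g * (y - 0)) / |y - 0|) '' D y) :=
        le_csSup (hDbddimg y 0) ⟨g₀, hg₀, hq0⟩
      refine ⟨y, hball ⟨?_, ?_⟩, by linarith⟩
      · rw [Metric.mem_ball, Real.dist_eq, sub_zero, abs_of_pos hy0]
        linarith
      · exact hy0.ne'
    obtain ⟨y, h1, h2⟩ := (hfreq.and_eventually hev0).exists
    linarith

end
end

section
/- Let U ⊆ ℝ^p be open and g : U → ℝ^p be continuously differentiable, and suppose the set {w ∈ U : the derivative Dg(w) is invertible} is dense in U. Then for every set Z ⊆ ℝ^p with empty interior, the preimage g⁻¹(Z) has empty interior in U. -/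
open Filter Topology Set

noncomputable section

/-- **Preimages of sets with empty interior under generically nondegenerate `C¹` maps.**
If `g` is continuously differentiable on an open set `U ⊆ ℝ^p` and the set of points of `U`
where its derivative is invertible is dense in `U`, then the preimage under `g` of any set with
empty interior has empty interior in `U`. -/
theorem preimage_empty_interior_of_generically_invertible_derivative
    {p : ℕ} (U : Set (EuclideanSpace ℝ (Fin p))) (hU : IsOpen U)
    (g : EuclideanSpace ℝ (Fin p) → EuclideanSpace ℝ (Fin p))
    (hg : ContDiffOn ℝ 1 g U)
    (hdense : U ⊆ closure {w ∈ U | Function.Bijective (fderiv ℝ g w)}) :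
    ∀ Z : Set (EuclideanSpace ℝ (Fin p)), interior Z = ∅ →
      interior (U ∩ g ⁻¹' Z) = ∅ := by
  intro Z hZ
  by_contra h
  obtain ⟨x, hx⟩ := Set.nonempty_iff_ne_empty.2 h
  set V := interior (U ∩ g ⁻¹' Z) with hV
  have hVopen : IsOpen V := isOpen_interior
  have hVU : V ⊆ U := interior_subset.trans (Set.inter_subset_left)
  have hVZ : V ⊆ g ⁻¹' Z := interior_subset.trans (Set.inter_subset_right)
  -- find a point of V where the derivative is bijective
  have hxcl : x ∈ closure {w ∈ U | Function.Bijective (fderiv ℝ g w)} := hdense (hVU hx)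
  obtain ⟨w, hwV, hwU, hwbij⟩ :
      ∃ w, w ∈ V ∧ w ∈ U ∧ Function.Bijective (fderiv ℝ g w) := by
    rcases mem_closure_iff.1 hxcl V hVopen hx with ⟨w, hwV, hwU, hwbij⟩
    exact ⟨w, hwV, hwU, hwbij⟩
  -- the derivative as a continuous linear equiv
  let e : EuclideanSpace ℝ (Fin p) ≃L[ℝ] EuclideanSpace ℝ (Fin p) :=
    (LinearEquiv.ofBijective (fderiv ℝ g w) hwbij).toContinuousLinearEquiv
  have hcd : ContDiffAt ℝ 1 g w := (hg w hwU).contDiffAt (hU.mem_nhds hwU)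
  have hstrict : HasStrictFDerivAt g (e : EuclideanSpace ℝ (Fin p) →L[ℝ]
      EuclideanSpace ℝ (Fin p)) w := by
    exact hcd.hasStrictFDerivAt one_ne_zero
  have hmap : Filter.map g (𝓝 w) = 𝓝 (g w) := hstrict.map_nhds_eq_of_equiv
  have hgw : g '' V ∈ 𝓝 (g w) := by
    rw [← hmap, Filter.mem_map]
    exact Filter.mem_of_superset (hVopen.mem_nhds hwV) (Set.subset_preimage_image g V)
  have : g w ∈ interior Z :=
    interior_mono (Set.image_subset_iff.2 hVZ) (mem_interior_iff_mem_nhds.2 hgw)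
  rw [hZ] at this
  exact this
end
end

section
/- Let (S,𝒜,μ) be a σ-finite measure space and let D : S ⇒ ℝ^p be a measurable set-valued map (as a map into the nonempty compact convex subsets of ℝ^p equipped with the Hausdorff distance) such that s ↦ sup{‖y‖ : y ∈ D(s)} is μ-integrable. Then for every q ∈ ℝ^p, the support function of the Aumann integral satisfies sup { ⟨a, q⟩ : a ∈ ∫_S D(s) dμ(s) } = ∫_S max_{v ∈ D(s)} ⟨v, q⟩ dμ(s), and the supremum on the left-hand side is attained by the integral of a measurable selection s ↦ g̃(s) ∈ D(s) with ⟨g̃(s), q⟩ = max_{v ∈ D(s)} ⟨v, q⟩ for all s. -/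
open MeasureTheory Filter Topology Set

noncomputable section

/-- Aumann integral of a set-valued map. -/
def aumannIntegral {S : Type*} [MeasurableSpace S] {E : Type*} [NormedAddCommGroup E]
    [NormedSpace ℝ E] (μ : Measure S) (F : S → Set E) : Set E :=
  {a | ∃ v : S → E, Integrable v μ ∧ (∀ s, v s ∈ F s) ∧ ∫ s, v s ∂μ = a}

/-- Measurability of a nonempty-compact set-valued map, as a map into the nonempty compact
subsets equipped with the Hausdorff distance (and its Borel σ-algebra). -/
def MeasurableSetValued {S : Type*} [MeasurableSpace S] {E : Type*} [MetricSpace E]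
    (D : S → Set E) : Prop :=
  ∃ D' : S → TopologicalSpace.NonemptyCompacts E,
    @Measurable _ _ _ (borel (TopologicalSpace.NonemptyCompacts E)) D' ∧
    ∀ s, (D' s : Set E) = D s



namespace AumannAux
open Metric TopologicalSpace

local notation "⟪" x ", " y "⟫" => @inner ℝ _ _ x y

variable {E : Type*} [NormedAddCommGroup E] [InnerProductSpace ℝ E]

def fc (c : ℝ) (q v : E) : ℝ := ⟪v, q⟫ - c * ‖v‖ ^ 2

lemma continuous_fc (c : ℝ) (q : E) : Continuous (fc c q) :=
  (continuous_id.inner continuous_const).sub (continuous_const.mul (continuous_norm.pow 2))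

lemma norm_half_add_sq (a v : E) :
    ‖(1/2:ℝ) • a + (1/2:ℝ) • v‖ ^ 2 = (‖a‖ ^ 2 + ‖v‖ ^ 2) / 2 - ‖a - v‖ ^ 2 / 4 := by
  rw [← smul_add, norm_smul, Real.norm_eq_abs, abs_of_pos (by norm_num : (0:ℝ) < 1/2)]
  linear_combination (1/4 : ℝ) * parallelogram_law_with_norm ℝ a v

lemma fc_midpoint (c : ℝ) (q v w : E) :
    fc c q ((1/2:ℝ) • v + (1/2:ℝ) • w) = (fc c q v + fc c q w) / 2 + c / 4 * ‖v - w‖ ^ 2 := by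
  unfold fc
  rw [inner_add_left, real_inner_smul_left, real_inner_smul_left, norm_half_add_sq]
  ring

lemma le_fc_max {c : ℝ} (q : E) {K : Set E} (hK : Convex ℝ K)
    {m v : E} (hm : m ∈ K) (hv : v ∈ K) (hmax : ∀ w ∈ K, fc c q w ≤ fc c q m) :
    fc c q v + c / 2 * ‖m - v‖ ^ 2 ≤ fc c q m := by
  have hmem : (1/2:ℝ) • m + (1/2:ℝ) • v ∈ K :=
    hK hm hv (by norm_num) (by norm_num) (by norm_num)
  have h1 := hmax _ hmem
  rw [fc_midpoint] at h1
  linarith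

lemma fc_sub_le (c : ℝ) (hc : 0 ≤ c) (q a b : E) :
    fc c q a - fc c q b ≤ (‖q‖ + c * (‖a‖ + ‖b‖)) * ‖a - b‖ := by
  have h1 : ⟪a, q⟫ - ⟪b, q⟫ ≤ ‖q‖ * ‖a - b‖ := by
    have h := real_inner_le_norm (a - b) q
    rw [inner_sub_left] at h
    nlinarith [h]
  have hd : ‖b‖ - ‖a‖ ≤ ‖a - b‖ := by
    have := norm_sub_norm_le b a
    rwa [norm_sub_rev] at this
  have h2 : ‖b‖ ^ 2 - ‖a‖ ^ 2 ≤ (‖a‖ + ‖b‖) * ‖a - b‖ := by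
    nlinarith [norm_nonneg a, norm_nonneg b, norm_nonneg (a - b)]
  have h3 := mul_le_mul_of_nonneg_left h2 hc
  unfold fc
  nlinarith [h1, h3]

lemma exists_fc_max (c : ℝ) (q : E) (K : NonemptyCompacts E) :
    ∃ m ∈ (K : Set E), ∀ v ∈ (K : Set E), fc c q v ≤ fc c q m := by
  obtain ⟨m, hm, hmax⟩ := K.isCompact.exists_isMaxOn K.nonempty (continuous_fc c q).continuousOn
  exact ⟨m, hm, fun v hv => hmax hv⟩

variable (E) in
abbrev CC := {K : NonemptyCompacts E // Convex ℝ (K : Set E)}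

def sel (c : ℝ) (q : E) (K : CC E) : E := (exists_fc_max c q K.1).choose

lemma sel_mem (c : ℝ) (q : E) (K : CC E) : sel c q K ∈ (K.1 : Set E) :=
  (exists_fc_max c q K.1).choose_spec.1

lemma sel_max (c : ℝ) (q : E) (K : CC E) :
    ∀ v ∈ (K.1 : Set E), fc c q v ≤ fc c q (sel c q K) :=
  (exists_fc_max c q K.1).choose_spec.2

set_option maxHeartbeats 1000000 in
lemma continuous_sel {c : ℝ} (hc : 0 < c) (q : E) : Continuous (sel (E := E) c q) := by
  rw [continuous_iff_continuousAt]
  intro K₀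
  rw [Metric.continuousAt_iff]
  intro ε hε
  obtain ⟨r₀', hr₀'⟩ := K₀.1.isCompact.isBounded.exists_norm_le
  set r₀ : ℝ := max r₀' 0 with hr₀def
  have hr₀ : ∀ x ∈ (K₀.1 : Set E), ‖x‖ ≤ r₀ := fun x hx => (hr₀' x hx).trans (le_max_left _ _)
  have hr₀0 : (0:ℝ) ≤ r₀ := le_max_right _ _
  set M : ℝ := r₀ + 1 with hMdef
  set L : ℝ := ‖q‖ + c * (2 * M) with hLdef
  have hM0 : (0:ℝ) < M := by positivity
  have hL0 : (0:ℝ) ≤ L := by positivity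
  set δ : ℝ := min 1 (min (ε/2) (c * ε^2 / (16 * (L+1)))) with hδdef
  have hδpos : 0 < δ := by
    apply lt_min (by norm_num)
    exact lt_min (by linarith) (by positivity)
  have hδ1 : δ ≤ 1 := min_le_left _ _
  have hδ2 : δ ≤ ε/2 := (min_le_right _ _).trans (min_le_left _ _)
  have hδ3 : δ ≤ c * ε^2 / (16 * (L+1)) := (min_le_right _ _).trans (min_le_right _ _)
  refine ⟨δ, hδpos, ?_⟩
  intro K hKd
  have hdist : hausdorffDist (K.1 : Set E) (K₀.1 : Set E) < δ := by
    rwa [Subtype.dist_eq, NonemptyCompacts.dist_eq] at hKd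
  have hfin : EMetric.hausdorffEdist (K.1 : Set E) (K₀.1 : Set E) ≠ ⊤ :=
    hausdorffEdist_ne_top_of_nonempty_of_bounded K.1.nonempty K₀.1.nonempty
      K.1.isCompact.isBounded K₀.1.isCompact.isBounded
  obtain ⟨x, hxK₀, hmx⟩ := exists_dist_lt_of_hausdorffDist_lt (sel_mem c q K) hdist hfin
  obtain ⟨y, hyK, hym₀⟩ := exists_dist_lt_of_hausdorffDist_lt' (sel_mem c q K₀) hdist hfin
  set m := sel c q K with hmdef
  set m₀ := sel c q K₀ with hm₀def
  -- norm bounds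
  have hnm₀ : ‖m₀‖ ≤ M := by have := hr₀ _ (sel_mem c q K₀); linarith
  have hnx : ‖x‖ ≤ M := by have := hr₀ _ hxK₀; linarith
  have hnm : ‖m‖ ≤ M := by
    have h := norm_sub_norm_le m x
    rw [← dist_eq_norm] at h
    have := hr₀ _ hxK₀
    linarith
  have hny : ‖y‖ ≤ M := by
    have h := norm_sub_norm_le y m₀
    rw [← dist_eq_norm] at h
    have := hr₀ _ (sel_mem c q K₀)
    linarith
  -- Lipschitz estimates
  have hlip : ∀ a b : E, ‖a‖ ≤ M → ‖b‖ ≤ M → ‖a - b‖ ≤ δ → fc c q a - fc c q b ≤ L * δ := by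
    intro a b ha hb hab
    have h := fc_sub_le c hc.le q a b
    have hle : (‖q‖ + c * (‖a‖ + ‖b‖)) * ‖a - b‖ ≤ L * δ := by
      apply mul_le_mul _ hab (norm_nonneg _) hL0
      have : c * (‖a‖ + ‖b‖) ≤ c * (2 * M) := by nlinarith
      linarith
    linarith
  have h1 : fc c q x + c / 2 * ‖m₀ - x‖ ^ 2 ≤ fc c q m₀ :=
    le_fc_max q K₀.2 (sel_mem c q K₀) hxK₀ (sel_max c q K₀)
  have h2 : fc c q m - fc c q x ≤ L * δ := by
    refine hlip m x hnm hnx ?_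
    rw [← dist_eq_norm]; exact hmx.le
  have h3 : fc c q m₀ - fc c q y ≤ L * δ := by
    refine hlip m₀ y hnm₀ hny ?_
    rw [← dist_eq_norm]; rw [dist_comm]; exact hym₀.le
  have h4 : fc c q y ≤ fc c q m := sel_max c q K y hyK
  have h5 : c / 2 * ‖m₀ - x‖ ^ 2 ≤ 2 * L * δ := by
    clear_value m m₀ L δ
    linarith
  have h6 : ‖m₀ - x‖ ≤ ε / 2 := by
    rw [le_div_iff₀ (by positivity : (0:ℝ) < 16 * (L+1))] at hδ3
    clear_value m m₀ L δ
    have hX : c * ‖m₀ - x‖ ^ 2 ≤ 4 * (L + 1) * δ := by nlinarith [hδpos.le]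
    have hX2 : c * ‖m₀ - x‖ ^ 2 ≤ c * (ε ^ 2 / 4) := by nlinarith
    have hX3 : ‖m₀ - x‖ ^ 2 ≤ ε ^ 2 / 4 := le_of_mul_le_mul_left hX2 hc
    nlinarith [norm_nonneg (m₀ - x), hε]
  calc dist m m₀ ≤ dist m x + dist x m₀ := dist_triangle _ _ _
    _ < δ + ε/2 := by
        apply add_lt_add_of_lt_of_le hmx
        rw [dist_comm, dist_eq_norm]; exact h6
    _ ≤ ε := by linarith



lemma measurable_comp_of_continuous {S : Type*} [MeasurableSpace S] {X : Type*}
    [TopologicalSpace X] {P : X → Prop} {F : Type*} [TopologicalSpace F] [MeasurableSpace F]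
    [BorelSpace F] {g : S → Subtype P} (hg : @Measurable _ _ _ (borel X) (fun s => (g s : X)))
    {f : Subtype P → F} (hf : Continuous f) : Measurable (fun s => f (g s)) := by
  apply measurable_of_isOpen
  intro U hU
  obtain ⟨W, hW, hWeq⟩ := isOpen_induced_iff.mp (hf.isOpen_preimage U hU)
  have heq : (fun s => f (g s)) ⁻¹' U = (fun s => (g s : X)) ⁻¹' W := by
    ext s
    simp only [mem_preimage]
    constructor
    · intro h
      have h2 : g s ∈ f ⁻¹' U := h
      rw [← hWeq] at h2
      exact h2
    · intro h
      have h2 : g s ∈ Subtype.val ⁻¹' W := h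
      rw [hWeq] at h2
      exact h2
  rw [heq]
  exact hg (MeasurableSpace.measurableSet_generateFrom hW)



end AumannAux


open TopologicalSpace AumannAux in
set_option maxHeartbeats 1000000 in
/-- **Support function of an Aumann integral.**  Let `D : S ⇒ ℝ^p` be a measurable set-valued
map with nonempty compact convex values whose norm-supremum is `μ`-integrable.  Then for every
`q ∈ ℝ^p` the support function of the Aumann integral of `D` equals the integral of the
support functions, and the supremum is attained by the integral of a measurable selection
realizing the pointwise maxima. -/
theorem support_function_of_aumann_integral
    {p : ℕ} {S : Type*} [MeasurableSpace S] (μ : Measure S) [SigmaFinite μ]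
    (D : S → Set (EuclideanSpace ℝ (Fin p)))
    (hconv : ∀ s, Convex ℝ (D s))
    (hmeas : MeasurableSetValued D)
    (hbound : Integrable (fun s => sSup (norm '' D s)) μ) :
    ∀ q : EuclideanSpace ℝ (Fin p),
      sSup {r : ℝ | ∃ a ∈ aumannIntegral μ D, r = (inner ℝ a q : ℝ)} =
        ∫ s, sSup ((fun v : EuclideanSpace ℝ (Fin p) => (inner ℝ v q : ℝ)) '' D s) ∂μ ∧
      ∃ gt : S → EuclideanSpace ℝ (Fin p), Measurable gt ∧ Integrable gt μ ∧
        (∀ s, gt s ∈ D s) ∧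
        (∀ s, (inner ℝ (gt s) q : ℝ) =
          sSup ((fun v : EuclideanSpace ℝ (Fin p) => (inner ℝ v q : ℝ)) '' D s)) ∧
        (∫ s, gt s ∂μ) ∈ aumannIntegral μ D ∧
        (inner ℝ (∫ s, gt s ∂μ) q : ℝ) =
          sSup {r : ℝ | ∃ a ∈ aumannIntegral μ D, r = (inner ℝ a q : ℝ)} := by
  intro q
  obtain ⟨D', hD'meas, hD'eq⟩ := hmeas
  have hconv' : ∀ s, Convex ℝ ((D' s : Set (EuclideanSpace ℝ (Fin p)))) := fun s => by rw [hD'eq s]; exact hconv s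
  have hKcomp : ∀ s, IsCompact (D s) := fun s => hD'eq s ▸ (D' s).isCompact
  set c : ℕ → ℝ := fun n => 1 / ((n : ℝ) + 1) with hcdef
  have hcpos : ∀ n, 0 < c n := fun n => by positivity
  have hc0 : Filter.Tendsto c Filter.atTop (nhds 0) := tendsto_one_div_add_atTop_nhds_zero_nat
  set g : ℕ → S → EuclideanSpace ℝ (Fin p) := fun n s => sel (c n) q ⟨D' s, hconv' s⟩ with hgdef
  have hgmem : ∀ n s, g n s ∈ D s := fun n s => hD'eq s ▸ sel_mem (c n) q ⟨D' s, hconv' s⟩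
  have hgmax : ∀ n s, ∀ v ∈ D s, fc (c n) q v ≤ fc (c n) q (g n s) := by
    intro n s v hv
    exact sel_max (c n) q ⟨D' s, hconv' s⟩ v (by rw [hD'eq s]; exact hv)
  have hgmeas : ∀ n, Measurable (g n) :=
    fun n => measurable_comp_of_continuous hD'meas (continuous_sel (hcpos n) q)
  -- key pointwise limit statement
  have key : ∀ s, ∃ a : EuclideanSpace ℝ (Fin p), a ∈ D s ∧ (∀ v ∈ D s, (inner ℝ v q : ℝ) ≤ (inner ℝ a q : ℝ)) ∧
      Filter.Tendsto (fun n => g n s) Filter.atTop (nhds a) := by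
    intro s
    have hKne : (D s).Nonempty := hD'eq s ▸ (D' s).nonempty
    obtain ⟨m, hmK, hmmax⟩ := (hKcomp s).exists_isMaxOn hKne
      ((continuous_id.inner continuous_const).continuousOn :
        ContinuousOn (fun v : EuclideanSpace ℝ (Fin p) => (inner ℝ v q : ℝ)) (D s))
    have hA : IsCompact (D s ∩ {v : EuclideanSpace ℝ (Fin p) | (inner ℝ v q : ℝ) = (inner ℝ m q : ℝ)}) :=
      (hKcomp s).inter_right (isClosed_eq (continuous_id.inner continuous_const)
        continuous_const)
    obtain ⟨a, haA, hamin⟩ := hA.exists_isMinOn ⟨m, hmK, rfl⟩ continuous_norm.continuousOn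
    have haK : a ∈ D s := haA.1
    have hat : (inner ℝ a q : ℝ) = (inner ℝ m q : ℝ) := haA.2
    have hmax' : ∀ v ∈ D s, (inner ℝ v q : ℝ) ≤ (inner ℝ a q : ℝ) := fun v hv =>
      hat ▸ hmmax hv
    refine ⟨a, haK, hmax', ?_⟩
    have hub : ∀ n, (inner ℝ (g n s) q : ℝ) ≤ (inner ℝ a q : ℝ) := fun n => hmax' _ (hgmem n s)
    have hkey : ∀ n, (inner ℝ a q : ℝ) - c n * ‖a‖ ^ 2 + c n * ‖g n s‖ ^ 2 ≤
        (inner ℝ (g n s) q : ℝ) := by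
      intro n
      have h := hgmax n s a haK
      unfold fc at h
      linarith
    have hlb : ∀ n, (inner ℝ a q : ℝ) - c n * ‖a‖ ^ 2 ≤ (inner ℝ (g n s) q : ℝ) := by
      intro n
      have := hkey n
      nlinarith [sq_nonneg ‖g n s‖, (hcpos n).le]
    have hnle : ∀ n, ‖g n s‖ ≤ ‖a‖ := by
      intro n
      have h1 := hkey n
      have h2 := hub n
      have h3 : c n * ‖g n s‖ ^ 2 ≤ c n * ‖a‖ ^ 2 := by linarith
      have h4 : ‖g n s‖ ^ 2 ≤ ‖a‖ ^ 2 := le_of_mul_le_mul_left h3 (hcpos n)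
      nlinarith [norm_nonneg (g n s), norm_nonneg a]
    apply tendsto_of_subseq_tendsto
    intro ns hns
    obtain ⟨v, hvK, φ, hφ, htend⟩ := (hKcomp s).tendsto_subseq (fun k => hgmem (ns k) s)
    have hct : Filter.Tendsto (fun k => c (ns (φ k))) Filter.atTop (nhds 0) :=
      hc0.comp (hns.comp hφ.tendsto_atTop)
    have hinner : Filter.Tendsto (fun k => (inner ℝ (g (ns (φ k)) s) q : ℝ)) Filter.atTop
        (nhds (inner ℝ v q : ℝ)) := htend.inner tendsto_const_nhds
    have heq : (inner ℝ v q : ℝ) = (inner ℝ a q : ℝ) := by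
      have hle : (inner ℝ v q : ℝ) ≤ (inner ℝ a q : ℝ) :=
        le_of_tendsto hinner (Filter.Eventually.of_forall fun k => hub _)
      have hg0 : Filter.Tendsto (fun k => (inner ℝ a q : ℝ) - c (ns (φ k)) * ‖a‖ ^ 2)
          Filter.atTop (nhds ((inner ℝ a q : ℝ) - 0 * ‖a‖ ^ 2)) :=
        tendsto_const_nhds.sub (hct.mul tendsto_const_nhds)
      rw [zero_mul, sub_zero] at hg0
      have hge : (inner ℝ a q : ℝ) ≤ (inner ℝ v q : ℝ) :=
        le_of_tendsto_of_tendsto' hg0 hinner fun k => hlb _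
      linarith
    have h2 : ‖v‖ ≤ ‖a‖ :=
      le_of_tendsto htend.norm (Filter.Eventually.of_forall fun k => hnle _)
    have h3 : ‖a‖ ≤ ‖v‖ := hamin ⟨hvK, heq.trans hat⟩
    have hveq : v = a := by
      by_contra hne
      have hav : 0 < ‖a - v‖ := norm_pos_iff.mpr (sub_ne_zero.mpr fun h => hne h.symm)
      have hmid : (1/2 : ℝ) • a + (1/2 : ℝ) • v ∈ D s :=
        hconv s haK hvK (by norm_num) (by norm_num) (by norm_num)
      have hmidt : (inner ℝ ((1/2 : ℝ) • a + (1/2 : ℝ) • v) q : ℝ) = (inner ℝ a q : ℝ) := by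
        rw [inner_add_left, real_inner_smul_left, real_inner_smul_left, ← heq]
        ring
      have hge' : ‖a‖ ≤ ‖(1/2 : ℝ) • a + (1/2 : ℝ) • v‖ := hamin ⟨hmid, hmidt.trans hat⟩
      have hpar := norm_half_add_sq a v
      nlinarith [hge', hpar, hav, h2, h3, norm_nonneg a, norm_nonneg v,
        norm_nonneg ((1/2 : ℝ) • a + (1/2 : ℝ) • v)]
    exact ⟨φ, hveq ▸ htend⟩
  choose gt hgtmem hgtmax hgttend using key
  have hgtmeas : Measurable gt :=
    measurable_of_tendsto_metrizable hgmeas (tendsto_pi_nhds.mpr hgttend)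
  have hsup : ∀ s, sSup ((fun v : EuclideanSpace ℝ (Fin p) => (inner ℝ v q : ℝ)) '' D s) = (inner ℝ (gt s) q : ℝ) := by
    intro s
    apply IsGreatest.csSup_eq
    exact ⟨⟨gt s, hgtmem s, rfl⟩, by rintro r ⟨v, hv, rfl⟩; exact hgtmax s v hv⟩
  have hgtnorm : ∀ s, ‖gt s‖ ≤ sSup (norm '' D s) := fun s =>
    le_csSup ((hKcomp s).image continuous_norm).bddAbove ⟨gt s, hgtmem s, rfl⟩
  have hgtint : Integrable gt μ := by
    refine hbound.mono' hgtmeas.aestronglyMeasurable (Filter.Eventually.of_forall fun s => ?_)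
    exact hgtnorm s
  have hinner_int : Integrable (fun s => (inner ℝ (gt s) q : ℝ)) μ := hgtint.inner_const q
  have hint_eq : ∀ v : S → EuclideanSpace ℝ (Fin p), Integrable v μ →
      ∫ s, (inner ℝ (v s) q : ℝ) ∂μ = (inner ℝ (∫ s, v s ∂μ) q : ℝ) := by
    intro v hv
    calc ∫ s, (inner ℝ (v s) q : ℝ) ∂μ = ∫ s, (inner ℝ q (v s) : ℝ) ∂μ := by
          simp_rw [real_inner_comm]
      _ = (inner ℝ q (∫ s, v s ∂μ) : ℝ) := integral_inner hv q
      _ = (inner ℝ (∫ s, v s ∂μ) q : ℝ) := real_inner_comm _ _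
  have hfun_int : Integrable (fun s => sSup ((fun v : EuclideanSpace ℝ (Fin p) => (inner ℝ v q : ℝ)) '' D s)) μ := by
    simp_rw [hsup]; exact hinner_int
  have hint_congr : ∫ s, sSup ((fun v : EuclideanSpace ℝ (Fin p) => (inner ℝ v q : ℝ)) '' D s) ∂μ =
      ∫ s, (inner ℝ (gt s) q : ℝ) ∂μ := by simp_rw [hsup]
  have hmemA : (∫ s, gt s ∂μ) ∈ aumannIntegral μ D := ⟨gt, hgtint, hgtmem, rfl⟩
  have hintgt : (inner ℝ (∫ s, gt s ∂μ) q : ℝ) =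
      ∫ s, sSup ((fun v : EuclideanSpace ℝ (Fin p) => (inner ℝ v q : ℝ)) '' D s) ∂μ := by
    rw [hint_congr, hint_eq gt hgtint]
  have hgreat : IsGreatest {r : ℝ | ∃ a ∈ aumannIntegral μ D, r = (inner ℝ a q : ℝ)}
      (∫ s, sSup ((fun v : EuclideanSpace ℝ (Fin p) => (inner ℝ v q : ℝ)) '' D s) ∂μ) := by
    constructor
    · exact ⟨∫ s, gt s ∂μ, hmemA, hintgt.symm⟩
    · rintro r ⟨a, ⟨v, hvint, hvmem, rfl⟩, rfl⟩
      rw [← hint_eq v hvint, hint_congr]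
      refine integral_mono (hvint.inner_const q) hinner_int fun s => ?_
      exact hgtmax s _ (hvmem s)
  have hmain : sSup {r : ℝ | ∃ a ∈ aumannIntegral μ D, r = (inner ℝ a q : ℝ)} =
      ∫ s, sSup ((fun v : EuclideanSpace ℝ (Fin p) => (inner ℝ v q : ℝ)) '' D s) ∂μ := hgreat.csSup_eq
  exact ⟨hmain, gt, hgtmeas, hgtint, hgtmem, fun s => (hsup s).symm, hmemA,
    hintgt.trans hmain.symm⟩

end
end
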